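/- arXiv:2603.19663 — 7 statements merged into one kernel-verified Lean document; each statement's English description precedes it below -/
import Mathlib

section
/- Let N ≥ 1 be an integer and let D_u, χ, A, B be positive constants. Suppose φ, ψ : [0,∞) → ℝ are C² functions with φ > 0 and ψ > 0, satisfying for all r > 0 the ODE −(N/2)φ(r) − (1/2) r φ'(r) = D_u (φ''(r) + ((N−1)/r) φ'(r)) − χ ( (φ ψ'/ψ)'(r) + ((N−1)/r) (φ(r) ψ'(r)/ψ(r)) ), with φ(0) = A, ψ(0) = B, φ'(0) = 0, ψ'(0) = 0. Then for all r ≥ 0, φ(r) = A B^{−χ/D_u} ψ(r)^{χ/D_u} e^{−r²/(4 D_u)}. -/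
open Real Set Topology

/-!
Written in divergence form, the equation says that `r ^ (N - 1) * F r` is constant, where
`F = r φ / 2 + Dᵤ φ' - χ φ ψ' / ψ` is the radial flux. Since `F 0 = 0`, the flux vanishes
identically, i.e. `(log φ)' = (χ / Dᵤ) (log ψ)' - r / (2 Dᵤ)`, and integrating once more gives
the closed formula for `φ`.
-/

theorem eq_of_hasDerivAt_zero_of_continuousOn_Ici {f : ℝ → ℝ} {a : ℝ}
    (hf : ContinuousOn f (Ici a)) (hf' : ∀ x ∈ Ioi a, HasDerivAt f 0 x) :
    ∀ x ∈ Ici a, f x = f a := by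
  intro x hx
  rcases (mem_Ici.1 hx).eq_or_lt with rfl | hlt
  · rfl
  obtain ⟨c, hc, hslope⟩ := exists_hasDerivAt_eq_slope f (fun _ => 0) hlt
    (hf.mono Icc_subset_Ici_self) fun c hc => hf' c hc.1
  rw [eq_comm, div_eq_zero_iff, sub_eq_zero, sub_eq_zero] at hslope
  exact hslope.resolve_right hlt.ne'

theorem HasDerivAt.pow_mul_radial {f : ℝ → ℝ} {f' r : ℝ} (n : ℕ) (hr : r ≠ 0)
    (hf : HasDerivAt f f' r) :
    HasDerivAt (fun s => s ^ n * f s) (r ^ n * (f' + n / r * f r)) r := by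
  refine ((hasDerivAt_pow n r).mul hf).congr_deriv ?_
  rcases n with _ | n
  · simp
  · field_simp
    push_cast
    ring

noncomputable def radialFlux (Du chi : ℝ) (φ dφ ψ dψ : ℝ → ℝ) (r : ℝ) : ℝ :=
  r / 2 * φ r + Du * dφ r - chi * (φ r * dψ r / ψ r)

section RadialFlux

variable {Du chi : ℝ} {φ dφ ddφ ψ dψ ddψ : ℝ → ℝ}

theorem continuousOn_radialFlux {s : Set ℝ} (hφ : ContinuousOn φ s) (hdφ : ContinuousOn dφ s)
    (hψ : ContinuousOn ψ s) (hdψ : ContinuousOn dψ s) (hψ0 : ∀ x ∈ s, ψ x ≠ 0) :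
    ContinuousOn (radialFlux Du chi φ dφ ψ dψ) s := by
  unfold radialFlux
  fun_prop (disch := assumption)

theorem hasDerivAt_radialFlux {r : ℝ} (hφ : HasDerivAt φ (dφ r) r)
    (hdφ : HasDerivAt dφ (ddφ r) r) (hψ : HasDerivAt ψ (dψ r) r)
    (hdψ : DifferentiableAt ℝ dψ r) (hψr : ψ r ≠ 0) :
    HasDerivAt (radialFlux Du chi φ dφ ψ dψ)
      (φ r / 2 + r / 2 * dφ r + Du * ddφ r - chi * deriv (fun s => φ s * dψ s / ψ s) r) r := by
  have hquot : HasDerivAt (fun s => φ s * dψ s / ψ s) (deriv (fun s => φ s * dψ s / ψ s) r) r :=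
    ((hφ.differentiableAt.mul hdψ).div hψ.differentiableAt hψr).hasDerivAt
  have hlin : HasDerivAt (fun s => s / 2 * φ s) (φ r / 2 + r / 2 * dφ r) r :=
    (((hasDerivAt_id' r).div_const 2).mul hφ).congr_deriv (by ring)
  exact (hlin.add (hdφ.const_mul Du)).sub (hquot.const_mul chi)

theorem radialFlux_eq_zero {N : ℕ} (hN : 1 ≤ N) (hψ : ∀ r ∈ Ici (0:ℝ), ψ r ≠ 0)
    (hφ' : ∀ r ∈ Ici (0:ℝ), HasDerivWithinAt φ (dφ r) (Ici 0) r)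
    (hφ'' : ∀ r ∈ Ici (0:ℝ), HasDerivWithinAt dφ (ddφ r) (Ici 0) r)
    (hψ' : ∀ r ∈ Ici (0:ℝ), HasDerivWithinAt ψ (dψ r) (Ici 0) r)
    (hψ'' : ∀ r ∈ Ici (0:ℝ), HasDerivWithinAt dψ (ddψ r) (Ici 0) r)
    (hODE : ∀ r ∈ Ioi (0:ℝ),
      -((N : ℝ) / 2) * φ r - (1/2) * r * dφ r
        = Du * (ddφ r + (((N : ℝ) - 1) / r) * dφ r)
          - chi * (derivWithin (fun s => φ s * dψ s / ψ s) (Ici 0) r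
                 + (((N : ℝ) - 1) / r) * (φ r * dψ r / ψ r)))
    (hF0 : radialFlux Du chi φ dφ ψ dψ 0 = 0) :
    ∀ r ∈ Ici (0:ℝ), radialFlux Du chi φ dφ ψ dψ r = 0 := by
  obtain ⟨n, rfl⟩ := Nat.exists_eq_add_of_le' hN
  set F := radialFlux Du chi φ dφ ψ dψ
  have hF : ContinuousOn F (Ici 0) :=
    continuousOn_radialFlux (fun r hr => (hφ' r hr).continuousWithinAt)
      (fun r hr => (hφ'' r hr).continuousWithinAt) (fun r hr => (hψ' r hr).continuousWithinAt)
      (fun r hr => (hψ'' r hr).continuousWithinAt) hψ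
  have hconserved : ∀ r ∈ Ioi (0:ℝ), HasDerivAt (fun s => s ^ n * F s) 0 r := by
    intro r (hr : 0 < r)
    have hnhds : Ici 0 ∈ 𝓝 r := Ici_mem_nhds hr
    have hFr := hasDerivAt_radialFlux (Du := Du) (chi := chi)
      ((hφ' r hr.le).hasDerivAt hnhds) ((hφ'' r hr.le).hasDerivAt hnhds)
      ((hψ' r hr.le).hasDerivAt hnhds) ((hψ'' r hr.le).hasDerivAt hnhds).differentiableAt
      (hψ r hr.le)
    refine (hFr.pow_mul_radial n hr.ne').congr_deriv ?_
    -- the equation at `r` says exactly `F' + (N - 1) / r * F = 0`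
    have hode := hODE r hr
    rw [derivWithin_of_mem_nhds hnhds] at hode
    simp only [radialFlux]
    push_cast at hode
    field_simp at hode ⊢
    linear_combination -r ^ n * hode
  have hG := eq_of_hasDerivAt_zero_of_continuousOn_Ici
    ((continuousOn_pow n).mul hF) hconserved
  intro r hr
  rcases (mem_Ici.1 hr).eq_or_lt with rfl | hpos
  · exact hF0
  have hGr : r ^ n * F r = 0 := by simpa [hF0] using hG r hr
  exact (mul_eq_zero.1 hGr).resolve_left (pow_ne_zero n hpos.ne')

theorem log_sub_mul_log_add_sq_eq (hDu : Du ≠ 0)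
    (hφ : ∀ r ∈ Ici (0:ℝ), 0 < φ r) (hψ : ∀ r ∈ Ici (0:ℝ), 0 < ψ r)
    (hφ' : ∀ r ∈ Ici (0:ℝ), HasDerivWithinAt φ (dφ r) (Ici 0) r)
    (hψ' : ∀ r ∈ Ici (0:ℝ), HasDerivWithinAt ψ (dψ r) (Ici 0) r)
    (hF : ∀ r ∈ Ici (0:ℝ), radialFlux Du chi φ dφ ψ dψ r = 0) :
    ∀ r ∈ Ici (0:ℝ), log (φ r) - chi / Du * log (ψ r) + r ^ 2 / (4 * Du)
      = log (φ 0) - chi / Du * log (ψ 0) := by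
  have hcont : ContinuousOn (fun r => log (φ r) - chi / Du * log (ψ r) + r ^ 2 / (4 * Du))
      (Ici 0) := by
    have hφc : ContinuousOn φ (Ici 0) := fun r hr => (hφ' r hr).continuousWithinAt
    have hψc : ContinuousOn ψ (Ici 0) := fun r hr => (hψ' r hr).continuousWithinAt
    exact ((hφc.log fun r hr => (hφ r hr).ne').sub
      (continuousOn_const.mul (hψc.log fun r hr => (hψ r hr).ne'))).add
      ((continuousOn_pow 2).div_const _)
  have hderiv : ∀ r ∈ Ioi (0:ℝ),
      HasDerivAt (fun r => log (φ r) - chi / Du * log (ψ r) + r ^ 2 / (4 * Du)) 0 r := by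
    intro r (hr : 0 < r)
    have hnhds : Ici 0 ∈ 𝓝 r := Ici_mem_nhds hr
    have hφr := (hφ r hr.le).ne'
    have hψr := (hψ r hr.le).ne'
    refine ((((hφ' r hr.le).hasDerivAt hnhds).log hφr).sub
      ((((hψ' r hr.le).hasDerivAt hnhds).log hψr).const_mul _)
      |>.add ((hasDerivAt_pow 2 r).div_const _)).congr_deriv ?_
    have hFr := hF r hr.le
    simp only [radialFlux] at hFr
    norm_num only
    field_simp at hFr ⊢
    linear_combination 2 * hFr
  simpa using eq_of_hasDerivAt_zero_of_continuousOn_Ici hcont hderiv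

end RadialFlux

theorem stmt0_general
    (N : ℕ) (hN : 1 ≤ N)
    (Du chi A B : ℝ) (hDu : 0 < Du) (φ dφ ddφ ψ dψ ddψ : ℝ → ℝ)
    (hφpos : ∀ r ∈ Ici (0:ℝ), 0 < φ r)
    (hψpos : ∀ r ∈ Ici (0:ℝ), 0 < ψ r)
    (hφ' : ∀ r ∈ Ici (0:ℝ), HasDerivWithinAt φ (dφ r) (Ici 0) r)
    (hφ'' : ∀ r ∈ Ici (0:ℝ), HasDerivWithinAt dφ (ddφ r) (Ici 0) r)
    (hψ' : ∀ r ∈ Ici (0:ℝ), HasDerivWithinAt ψ (dψ r) (Ici 0) r)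
    (hψ'' : ∀ r ∈ Ici (0:ℝ), HasDerivWithinAt dψ (ddψ r) (Ici 0) r)
    (hODE : ∀ r ∈ Ioi (0:ℝ),
      -((N : ℝ) / 2) * φ r - (1/2) * r * dφ r
        = Du * (ddφ r + (((N : ℝ) - 1) / r) * dφ r)
          - chi * (derivWithin (fun s => φ s * dψ s / ψ s) (Ici 0) r
                 + (((N : ℝ) - 1) / r) * (φ r * dψ r / ψ r)))
    (hφ0 : φ 0 = A) (hψ0 : ψ 0 = B) (hdφ0 : dφ 0 = 0) (hdψ0 : dψ 0 = 0) :
    ∀ r ∈ Ici (0:ℝ),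
      φ r = A * B ^ (-(chi / Du)) * ψ r ^ (chi / Du) * Real.exp (-(r^2) / (4 * Du)) := by
  intro r hr
  have hA : 0 < A := hφ0 ▸ hφpos 0 self_mem_Ici
  have hB : 0 < B := hψ0 ▸ hψpos 0 self_mem_Ici
  have hF := radialFlux_eq_zero hN (fun r hr => (hψpos r hr).ne') hφ' hφ'' hψ' hψ'' hODE
    (by simp [radialFlux, hdφ0, hdψ0])
  have hlog := log_sub_mul_log_add_sq_eq hDu.ne' hφpos hψpos hφ' hψ' hF r hr
  rw [hφ0, hψ0] at hlog
  rw [← exp_log (hφpos r hr), ← exp_log hA, rpow_def_of_pos hB, rpow_def_of_pos (hψpos r hr),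
    ← exp_add, ← exp_add, ← exp_add]
  congr 1
  linear_combination hlog

/-- Integrating the first equation of the radial self-similar Keller–Segel
system shows that the cell-density profile `φ` is an explicit function of the
signal profile `ψ`:  `φ(r) = A B^{-χ/Dᵤ} ψ(r)^{χ/Dᵤ} e^{-r²/(4Dᵤ)}`. -/
theorem stmt0
    (N : ℕ) (hN : 1 ≤ N)
    (Du chi A B : ℝ) (hDu : 0 < Du) (hchi : 0 < chi) (hA : 0 < A) (hB : 0 < B)
    (φ dφ ddφ ψ dψ ddψ : ℝ → ℝ)
    (hφpos : ∀ r ∈ Ici (0:ℝ), 0 < φ r)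
    (hψpos : ∀ r ∈ Ici (0:ℝ), 0 < ψ r)
    (hφ' : ∀ r ∈ Ici (0:ℝ), HasDerivWithinAt φ (dφ r) (Ici 0) r)
    (hφ'' : ∀ r ∈ Ici (0:ℝ), HasDerivWithinAt dφ (ddφ r) (Ici 0) r)
    (hψ' : ∀ r ∈ Ici (0:ℝ), HasDerivWithinAt ψ (dψ r) (Ici 0) r)
    (hψ'' : ∀ r ∈ Ici (0:ℝ), HasDerivWithinAt dψ (ddψ r) (Ici 0) r)
    (hddφc : ContinuousOn ddφ (Ici 0)) (hddψc : ContinuousOn ddψ (Ici 0))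
    (hODE : ∀ r ∈ Ioi (0:ℝ),
      -((N : ℝ) / 2) * φ r - (1/2) * r * dφ r
        = Du * (ddφ r + (((N : ℝ) - 1) / r) * dφ r)
          - chi * (derivWithin (fun s => φ s * dψ s / ψ s) (Ici 0) r
                 + (((N : ℝ) - 1) / r) * (φ r * dψ r / ψ r)))
    (hφ0 : φ 0 = A) (hψ0 : ψ 0 = B) (hdφ0 : dφ 0 = 0) (hdψ0 : dψ 0 = 0) :
    ∀ r ∈ Ici (0:ℝ),
      φ r = A * B ^ (-(chi / Du)) * ψ r ^ (chi / Du) * Real.exp (-(r^2) / (4 * Du)) :=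
  stmt0_general N hN Du chi A B hDu φ dφ ddφ ψ dψ ddψ hφpos hψpos hφ' hφ'' hψ' hψ'' hODE hφ0 hψ0
    hdφ0 hdψ0
end

section
/- Let N ≥ 1 be an integer, D_u, D_v > 0, β ≥ 1, and let A₁ ≥ A₂ > 0 and κ₁ ≥ κ₂ be real numbers with A₁ + κ₁ > A₂ + κ₂. Set ρ(r) = r^{N−1} e^{r²/(4D_v)}. Suppose φ₁, φ₂ : [0,R) → ℝ are positive C² functions with φ₁(0) = φ₂(0) = 1, φ₁'(0) = φ₂'(0) = 0, satisfying for r ∈ (0,R): D_v (ρ φ₁')'(r) ≥ κ₁ ρ(r) φ₁(r) + A₁ ρ(r) φ₁(r)^β e^{−r²/(4D_u)} and D_v (ρ φ₂')'(r) ≤ κ₂ ρ(r) φ₂(r) + A₂ ρ(r) φ₂(r)^β e^{−r²/(4D_u)}. Then φ₁(r) > φ₂(r) for every r ∈ (0,R). -/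
/-!
Put `q = φ₁ / φ₂` and `W = ρ (φ₁' φ₂ - φ₁ φ₂')`, so that `q' = W / (ρ φ₂²)` and
`Dᵥ W' ≥ ρ G` with `G = (κ₁ - κ₂) φ₁ φ₂ + e^{-r²/(4Dᵤ)} (A₁ φ₁^β φ₂ - A₂ φ₂^β φ₁)`.
Since `β ≥ 1`, `G > 0` wherever `φ₂ ≤ φ₁`, and `G(0) = κ₁ - κ₂ + A₁ - A₂ > 0`, so `W` increases
near `0`. If it vanished or changed sign there, it would be bounded by a negative constant on some
`(0, u]`, and so would `q'` (as `ρ φ₂²` is bounded), contradicting `q'(0) = 0`. Hence `W > 0`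
near `0`, `q` increases and `φ₁ > φ₂` there. As long as `q ≥ q(0) = 1`, `W` keeps increasing,
so it never comes back to `0`; therefore `q` is strictly increasing on `[0, R)`.
-/

open Real Set Filter Topology

theorem strictMonoOn_of_hasDerivAt_pos {D : Set ℝ} (hD : Convex ℝ D) {f f' : ℝ → ℝ}
    (hf : ContinuousOn f D) (hf' : ∀ x ∈ interior D, HasDerivAt f (f' x) x)
    (hf'₀ : ∀ x ∈ interior D, 0 < f' x) : StrictMonoOn f D :=
  strictMonoOn_of_deriv_pos hD hf fun x hx => (hf' x hx).deriv ▸ hf'₀ x hx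

theorem HasDerivWithinAt.le_of_hasDerivAt_le {f g : ℝ → ℝ} {a b c f' : ℝ} (hab : a < b)
    (hf : HasDerivWithinAt f f' (Ici a) a) (hfc : ContinuousOn f (Icc a b))
    (hg : ∀ x ∈ Ioo a b, HasDerivAt f (g x) x) (hgc : ∀ x ∈ Ioo a b, g x ≤ c) : f' ≤ c := by
  rw [← interior_Icc] at hg hgc
  have hgrowth : ∀ x ∈ Icc a b, f x - f a ≤ c * (x - a) := fun x hx =>
    (convex_Icc a b).image_sub_le_mul_sub_of_deriv_le hfc
      (fun y hy => (hg y hy).differentiableAt.differentiableWithinAt)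
      (fun y hy => (hg y hy).deriv ▸ hgc y hy) a (left_mem_Icc.2 hab.le) x hx hx.1
  rw [hasDerivWithinAt_iff_tendsto_slope, Ici_sdiff_left] at hf
  refine le_of_tendsto hf ?_
  filter_upwards [Ioc_mem_nhdsGT hab] with x hx
  rw [slope_def_field, div_le_iff₀ (sub_pos.2 hx.1)]
  exact hgrowth x (Ioc_subset_Icc_self hx)

theorem ContinuousOn.exists_first_nonpos {f : ℝ → ℝ} {a b : ℝ} (hab : a ≤ b)
    (hf : ContinuousOn f (Icc a b)) (ha : 0 < f a) (hb : f b ≤ 0) :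
    ∃ c ∈ Ioc a b, f c ≤ 0 ∧ ∀ t ∈ Ico a c, 0 < f t := by
  set K := Icc a b ∩ f ⁻¹' Iic 0
  have hK : IsCompact K :=
    isCompact_Icc.of_isClosed_subset (hf.preimage_isClosed_of_isClosed isClosed_Icc isClosed_Iic)
      inter_subset_left
  obtain ⟨c, ⟨hc, hfc⟩, hleast⟩ := hK.exists_isLeast ⟨b, ⟨hab, le_rfl⟩, hb⟩
  have hac : a ≠ c := by rintro rfl; exact (not_le.2 ha) hfc
  refine ⟨c, ⟨lt_of_le_of_ne hc.1 hac, hc.2⟩, hfc, fun t ht => ?_⟩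
  by_contra! hft
  exact (not_le.2 ht.2) (hleast ⟨⟨ht.1, ht.2.le.trans hc.2⟩, hft⟩)

theorem StrictMonoOn.pos_of_hasDerivWithinAt_zero {q W P : ℝ → ℝ} {a b : ℝ}
    (hW : StrictMonoOn W (Ioc a b)) (hq₀ : HasDerivWithinAt q 0 (Ici a) a)
    (hqc : ContinuousOn q (Icc a b)) (hq : ∀ t ∈ Ioo a b, HasDerivAt q (W t / P t) t)
    (hP : ∀ t ∈ Ioo a b, 0 < P t) (hPc : ContinuousOn P (Icc a b)) :
    ∀ t ∈ Ioc a b, 0 < W t := by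
  intro s hs
  by_contra! hWs
  obtain ⟨u, hau, hus⟩ := exists_between hs.1
  have hu : u ∈ Ioc a b := ⟨hau, hus.le.trans hs.2⟩
  have hWu : W u < 0 := (hW hu hs hus).trans_le hWs
  have hIoo : Ioo a u ⊆ Ioo a b := Ioo_subset_Ioo_right hu.2
  obtain ⟨C, hC⟩ := isCompact_Icc.bddAbove_image (hPc.mono (Icc_subset_Icc_right hu.2))
  have hPC : ∀ t ∈ Ioo a u, P t ≤ C := fun t ht => hC (mem_image_of_mem P (Ioo_subset_Icc_self ht))
  obtain ⟨v, hv⟩ := nonempty_Ioo.2 hau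
  have hCpos : 0 < C := (hP v (hIoo hv)).trans_le (hPC v hv)
  -- On `(a, u)` the slope of `q` stays below `W u / C < 0`, which is incompatible with `q' a = 0`.
  have hslope : (0 : ℝ) ≤ W u / C := by
    refine hq₀.le_of_hasDerivAt_le hu.1 (hqc.mono (Icc_subset_Icc_right hu.2))
      (fun t ht => hq t (hIoo ht)) fun t ht => ?_
    have hPt := hP t (hIoo ht)
    calc W t / P t ≤ W u / P t :=
          div_le_div_of_nonneg_right (hW ⟨ht.1, ht.2.le.trans hu.2⟩ hu ht.2).le hPt.le
      _ ≤ W u / C := by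
          rw [div_le_div_iff₀ hPt hCpos]
          nlinarith [hPC t ht]
  exact (not_le.2 (div_neg_of_neg_of_pos hWu hCpos)) hslope

theorem strictMonoOn_Icc_of_hasDerivAt_div {q W P : ℝ → ℝ} {a b : ℝ}
    (hqc : ContinuousOn q (Icc a b)) (hq : ∀ t ∈ Ioo a b, HasDerivAt q (W t / P t) t)
    (hW : ∀ t ∈ Ioo a b, 0 < W t) (hP : ∀ t ∈ Ioo a b, 0 < P t) : StrictMonoOn q (Icc a b) :=
  strictMonoOn_of_hasDerivAt_pos (convex_Icc a b) hqc (by rwa [interior_Icc])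
    (by rw [interior_Icc]; exact fun t ht => div_pos (hW t ht) (hP t ht))

theorem numerator_pos_of_pos_near_left {q W W' P : ℝ → ℝ} {a δ b : ℝ} (hδ : a < δ)
    (hqc : ContinuousOn q (Icc a b)) (hq : ∀ t ∈ Ioo a b, HasDerivAt q (W t / P t) t)
    (hP : ∀ t ∈ Ioo a b, 0 < P t) (hW : ∀ t ∈ Ioc a b, HasDerivAt W (W' t) t)
    (hW' : ∀ t ∈ Ioo a b, q a ≤ q t → 0 < W' t) (hWδ : ∀ t ∈ Ioc a δ, 0 < W t) :
    ∀ t ∈ Ioo a b, 0 < W t := by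
  intro s hs
  by_contra! hWs
  have hδs : δ ≤ s := by
    by_contra! h
    exact (not_le.2 (hWδ s ⟨hs.1, h.le⟩)) hWs
  -- At the first zero `c` of `W` after `δ`, `q` has increased up to `c`, so `W` has too.
  obtain ⟨c, hc, hWc, hWpos⟩ := ContinuousOn.exists_first_nonpos hδs
    (fun t ht => (hW t ⟨hδ.trans_le ht.1, ht.2.trans hs.2.le⟩).continuousAt.continuousWithinAt)
    (hWδ δ ⟨hδ, le_rfl⟩) hWs
  have hcb : c ≤ b := hc.2.trans hs.2.le
  have hWpos' : ∀ t ∈ Ioo a c, 0 < W t := fun t ht => by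
    rcases le_or_gt t δ with htδ | hδt
    · exact hWδ t ⟨ht.1, htδ⟩
    · exact hWpos t ⟨hδt.le, ht.2⟩
  have hqmono : StrictMonoOn q (Icc a c) :=
    strictMonoOn_Icc_of_hasDerivAt_div (hqc.mono (Icc_subset_Icc_right hcb))
      (fun t ht => hq t ⟨ht.1, ht.2.trans_le hcb⟩) hWpos' fun t ht => hP t ⟨ht.1, ht.2.trans_le hcb⟩
  have hWmono : StrictMonoOn W (Ioc a c) :=
    strictMonoOn_of_hasDerivAt_pos (convex_Ioc a c)
      (fun t ht => (hW t ⟨ht.1, ht.2.trans hcb⟩).continuousAt.continuousWithinAt)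
      (by rw [interior_Ioc]; exact fun t ht => hW t ⟨ht.1, ht.2.le.trans hcb⟩)
      (by
        rw [interior_Ioc]
        exact fun t ht => hW' t ⟨ht.1, ht.2.trans_le hcb⟩ (hqmono.monotoneOn
          (left_mem_Icc.2 (hδ.trans hc.1).le) (Ioo_subset_Icc_self ht) ht.1.le))
  exact (not_le.2 ((hWδ δ ⟨hδ, le_rfl⟩).trans
    (hWmono ⟨hδ, hc.1.le⟩ ⟨hδ.trans hc.1, le_rfl⟩ hc.1))) hWc

theorem strictMonoOn_of_numerator_deriv_pos {q W W' P : ℝ → ℝ} {a b : ℝ}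
    (hq₀ : HasDerivWithinAt q 0 (Ici a) a) (hqc : ContinuousOn q (Icc a b))
    (hq : ∀ t ∈ Ioo a b, HasDerivAt q (W t / P t) t)
    (hP : ∀ t ∈ Ioo a b, 0 < P t) (hPc : ContinuousOn P (Icc a b))
    (hW : ∀ t ∈ Ioc a b, HasDerivAt W (W' t) t)
    (hW'₀ : ∀ᶠ t in 𝓝[>] a, 0 < W' t) (hW' : ∀ t ∈ Ioo a b, q a ≤ q t → 0 < W' t) :
    StrictMonoOn q (Icc a b) := by
  rcases le_or_gt b a with hba | hab
  · exact (subsingleton_Icc_of_ge hba).strictMonoOn q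
  obtain ⟨u, hu, hW'u⟩ := mem_nhdsGT_iff_exists_Ioo_subset.1 hW'₀
  set δ := min u b
  have hδb : δ ≤ b := min_le_right _ _
  have hWδ : StrictMonoOn W (Ioc a δ) :=
    strictMonoOn_of_hasDerivAt_pos (convex_Ioc a δ)
      (fun t ht => (hW t ⟨ht.1, ht.2.trans hδb⟩).continuousAt.continuousWithinAt)
      (by rw [interior_Ioc]; exact fun t ht => hW t ⟨ht.1, ht.2.le.trans hδb⟩)
      (by rw [interior_Ioc]; exact fun t ht => hW'u ⟨ht.1, ht.2.trans_le (min_le_left _ _)⟩)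
  have hWδpos := hWδ.pos_of_hasDerivWithinAt_zero hq₀ (hqc.mono (Icc_subset_Icc_right hδb))
    (fun t ht => hq t ⟨ht.1, ht.2.trans_le hδb⟩) (fun t ht => hP t ⟨ht.1, ht.2.trans_le hδb⟩)
    (hPc.mono (Icc_subset_Icc_right hδb))
  exact strictMonoOn_Icc_of_hasDerivAt_div hqc hq
    (numerator_pos_of_pos_near_left (lt_min hu hab) hqc hq hP hW hW' hWδpos) hP

/-- With `E = e^{-r²/(4Dᵤ)}`, `x = φ₁`, `y = φ₂`, the sub/supersolution inequalities give
`Dᵥ W' ≥ ρ · crossSource …` for the weighted Wronskian `W = ρ (φ₁' φ₂ - φ₁ φ₂')`. -/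
noncomputable def crossSource (κ₁ κ₂ A₁ A₂ β E x y : ℝ) : ℝ :=
  (κ₁ - κ₂) * (x * y) + E * (A₁ * x ^ β * y - A₂ * y ^ β * x)

theorem crossSource_pos {κ₁ κ₂ A₁ A₂ β E x y : ℝ} (hβ : 1 ≤ β) (hA12 : A₂ ≤ A₁) (hA2 : 0 ≤ A₂)
    (hκ12 : κ₂ ≤ κ₁) (hsum : A₂ + κ₂ < A₁ + κ₁) (hE : 0 < E) (hy : 0 < y) (hyx : y ≤ x) :
    0 < crossSource κ₁ κ₂ A₁ A₂ β E x y := by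
  have hx : 0 < x := hy.trans_le hyx
  have hfactor : crossSource κ₁ κ₂ A₁ A₂ β E x y
      = x * y * ((κ₁ - κ₂) + E * (A₁ * x ^ (β - 1) - A₂ * y ^ (β - 1))) := by
    rw [crossSource, rpow_sub_one hx.ne', rpow_sub_one hy.ne']
    field_simp
  have hpow : y ^ (β - 1) ≤ x ^ (β - 1) := rpow_le_rpow hy.le hyx (by linarith)
  have hypow : 0 < y ^ (β - 1) := rpow_pos_of_pos hy _
  have hbracket : 0 < (κ₁ - κ₂) + E * ((A₁ - A₂) * y ^ (β - 1)) := by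
    rcases hκ12.lt_or_eq with hκ | hκ
    · have : 0 ≤ E * ((A₁ - A₂) * y ^ (β - 1)) := by
        have := sub_nonneg.2 hA12
        positivity
      linarith
    · have : 0 < E * ((A₁ - A₂) * y ^ (β - 1)) :=
        mul_pos hE (mul_pos (by linarith) hypow)
      linarith
  rw [hfactor]
  refine mul_pos (mul_pos hx hy) (hbracket.trans_le ?_)
  gcongr
  nlinarith [mul_le_mul_of_nonneg_left hpow (hA2.trans hA12)]

theorem sub_mul_pos_of_crossSource_pos {Dv κ₁ κ₂ A₁ A₂ β ρ E x y F₁ F₂ : ℝ} (hDv : 0 < Dv)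
    (hρ : 0 < ρ) (hx : 0 ≤ x) (hy : 0 ≤ y)
    (h₁ : κ₁ * ρ * x + A₁ * ρ * x ^ β * E ≤ Dv * F₁)
    (h₂ : Dv * F₂ ≤ κ₂ * ρ * y + A₂ * ρ * y ^ β * E)
    (hG : 0 < crossSource κ₁ κ₂ A₁ A₂ β E x y) : 0 < F₁ * y - F₂ * x := by
  have hbound : ρ * crossSource κ₁ κ₂ A₁ A₂ β E x y ≤ Dv * (F₁ * y - F₂ * x) := by
    rw [crossSource]
    nlinarith [mul_le_mul_of_nonneg_left h₁ hy, mul_le_mul_of_nonneg_left h₂ hx]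
  exact pos_of_mul_pos_right ((mul_pos hρ hG).trans_le hbound) hDv.le

theorem ContinuousWithinAt.eventually_crossSource_pos {κ₁ κ₂ A₁ A₂ β : ℝ} {E f g : ℝ → ℝ}
    {s : Set ℝ} {a : ℝ} (hβ : 1 ≤ β) (hA12 : A₂ ≤ A₁) (hA2 : 0 ≤ A₂) (hκ12 : κ₂ ≤ κ₁)
    (hsum : A₂ + κ₂ < A₁ + κ₁) (hE : ContinuousWithinAt E s a) (hf : ContinuousWithinAt f s a)
    (hg : ContinuousWithinAt g s a) (hEa : 0 < E a) (hga : 0 < g a) (hfg : f a = g a) :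
    ∀ᶠ t in 𝓝[s] a, 0 < crossSource κ₁ κ₂ A₁ A₂ β (E t) (f t) (g t) := by
  have hβ₀ : (0 : ℝ) ≤ β := zero_le_one.trans hβ
  have hcont : ContinuousWithinAt (fun t => crossSource κ₁ κ₂ A₁ A₂ β (E t) (f t) (g t)) s a :=
    (continuousWithinAt_const.mul (hf.mul hg)).add (hE.mul
      (((continuousWithinAt_const.mul (hf.rpow_const (Or.inr hβ₀))).mul hg).sub
        ((continuousWithinAt_const.mul (hg.rpow_const (Or.inr hβ₀))).mul hf)))
  exact hcont.eventually
    (lt_mem_nhds (crossSource_pos hβ hA12 hA2 hκ12 hsum hEa hga hfg.ge))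

theorem strictMonoOn_div_of_flux_le {Du Dv β A₁ A₂ κ₁ κ₂ b : ℝ}
    {ρ φ₁ dφ₁ F₁ φ₂ dφ₂ F₂ : ℝ → ℝ} (hDv : 0 < Dv) (hβ : 1 ≤ β) (hA12 : A₂ ≤ A₁) (hA2 : 0 ≤ A₂)
    (hκ12 : κ₂ ≤ κ₁) (hsum : A₂ + κ₂ < A₁ + κ₁)
    (hρ : ∀ t ∈ Ioo 0 b, 0 < ρ t) (hρc : ContinuousOn ρ (Icc 0 b))
    (hpos₁ : ∀ t ∈ Ioo 0 b, 0 < φ₁ t) (hpos₂ : ∀ t ∈ Icc 0 b, 0 < φ₂ t)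
    (hφ₁ : ∀ t ∈ Icc 0 b, HasDerivWithinAt φ₁ (dφ₁ t) (Ici 0) t)
    (hφ₂ : ∀ t ∈ Icc 0 b, HasDerivWithinAt φ₂ (dφ₂ t) (Ici 0) t)
    (hflux₁ : ∀ t ∈ Ioc 0 b, HasDerivAt (fun s => ρ s * dφ₁ s) (F₁ t) t)
    (hflux₂ : ∀ t ∈ Ioc 0 b, HasDerivAt (fun s => ρ s * dφ₂ s) (F₂ t) t)
    (hineq₁ : ∀ t ∈ Ioo 0 b,
      κ₁ * ρ t * φ₁ t + A₁ * ρ t * φ₁ t ^ β * exp (-(t ^ 2) / (4 * Du)) ≤ Dv * F₁ t)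
    (hineq₂ : ∀ t ∈ Ioo 0 b,
      Dv * F₂ t ≤ κ₂ * ρ t * φ₂ t + A₂ * ρ t * φ₂ t ^ β * exp (-(t ^ 2) / (4 * Du)))
    (hφ₁0 : φ₁ 0 = 1) (hφ₂0 : φ₂ 0 = 1) (hdφ₁0 : dφ₁ 0 = 0) (hdφ₂0 : dφ₂ 0 = 0) :
    StrictMonoOn (fun t => φ₁ t / φ₂ t) (Icc 0 b) := by
  rcases le_or_gt b 0 with hb | hb
  · exact (subsingleton_Icc_of_ge hb).strictMonoOn _
  have h0 : (0 : ℝ) ∈ Icc 0 b := left_mem_Icc.2 hb.le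
  have hd : ∀ t ∈ Ioc 0 b, HasDerivAt φ₁ (dφ₁ t) t ∧ HasDerivAt φ₂ (dφ₂ t) t := fun t ht =>
    ⟨(hφ₁ t (Ioc_subset_Icc_self ht)).hasDerivAt (Ici_mem_nhds ht.1),
      (hφ₂ t (Ioc_subset_Icc_self ht)).hasDerivAt (Ici_mem_nhds ht.1)⟩
  have hc₁ : ContinuousOn φ₁ (Icc 0 b) := fun t ht =>
    (hφ₁ t ht).continuousWithinAt.mono Icc_subset_Ici_self
  have hc₂ : ContinuousOn φ₂ (Icc 0 b) := fun t ht =>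
    (hφ₂ t ht).continuousWithinAt.mono Icc_subset_Ici_self
  have hW' : ∀ t ∈ Ioo 0 b,
      0 < crossSource κ₁ κ₂ A₁ A₂ β (exp (-(t ^ 2) / (4 * Du))) (φ₁ t) (φ₂ t) →
      0 < F₁ t * φ₂ t - F₂ t * φ₁ t := fun t ht =>
    sub_mul_pos_of_crossSource_pos hDv (hρ t ht) (hpos₁ t ht).le
      (hpos₂ t (Ioo_subset_Icc_self ht)).le (hineq₁ t ht) (hineq₂ t ht)
  refine strictMonoOn_of_numerator_deriv_pos (P := fun t => ρ t * φ₂ t ^ 2)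
    (W := fun t => ρ t * dφ₁ t * φ₂ t - φ₁ t * (ρ t * dφ₂ t))
    (W' := fun t => F₁ t * φ₂ t - F₂ t * φ₁ t) ?_ ?_ ?_ ?_ ?_ ?_ ?_ ?_
  · simpa [hφ₁0, hφ₂0, hdφ₁0, hdφ₂0] using
      (hφ₁ 0 h0).fun_div (hφ₂ 0 h0) (hpos₂ 0 h0).ne'
  · exact hc₁.div hc₂ fun t ht => (hpos₂ t ht).ne'
  · intro t ht
    refine ((hd t (Ioo_subset_Ioc_self ht)).1.fun_div (hd t (Ioo_subset_Ioc_self ht)).2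
      (hpos₂ t (Ioo_subset_Icc_self ht)).ne').congr_deriv ?_
    field_simp [(hρ t ht).ne']
  · exact fun t ht => mul_pos (hρ t ht) (pow_pos (hpos₂ t (Ioo_subset_Icc_self ht)) 2)
  · exact hρc.mul (hc₂.pow 2)
  · intro t ht
    refine (((hflux₁ t ht).fun_mul (hd t ht).2).fun_sub
      ((hd t ht).1.fun_mul (hflux₂ t ht))).congr_deriv ?_
    ring
  · have hG := ContinuousWithinAt.eventually_crossSource_pos hβ hA12 hA2 hκ12 hsum
      (by fun_prop : Continuous fun t : ℝ => exp (-(t ^ 2) / (4 * Du))).continuousWithinAt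
      (hφ₁ 0 h0).continuousWithinAt (hφ₂ 0 h0).continuousWithinAt
      (exp_pos _) (hpos₂ 0 h0) (hφ₁0.trans hφ₂0.symm)
    filter_upwards [nhdsWithin_mono 0 Ioi_subset_Ici_self hG, Ioo_mem_nhdsGT hb] with t hGt ht
      using hW' t ht hGt
  · intro t ht hq
    have hφ₂t := hpos₂ t (Ioo_subset_Icc_self ht)
    rw [hφ₁0, hφ₂0, div_one, one_le_div hφ₂t] at hq
    exact hW' t ht (crossSource_pos hβ hA12 hA2 hκ12 hsum (exp_pos _) hφ₂t hq)

theorem stmt2_general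
    (N : ℕ) (Du Dv β A₁ A₂ κ₁ κ₂ : ℝ)
    (hDv : 0 < Dv) (hβ : 1 ≤ β)
    (hA12 : A₂ ≤ A₁) (hA2 : 0 < A₂) (hκ12 : κ₂ ≤ κ₁) (hsum : A₂ + κ₂ < A₁ + κ₁)
    (R : EReal)
    (ρ : ℝ → ℝ) (hρ : ∀ r : ℝ, ρ r = r ^ (N - 1) * Real.exp (r ^ 2 / (4 * Dv)))
    (φ₁ dφ₁ F₁ φ₂ dφ₂ F₂ : ℝ → ℝ)
    (hpos₁ : ∀ r : ℝ, 0 ≤ r → (r : EReal) < R → 0 < φ₁ r)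
    (hpos₂ : ∀ r : ℝ, 0 ≤ r → (r : EReal) < R → 0 < φ₂ r)
    (hφ₁' : ∀ r : ℝ, 0 ≤ r → (r : EReal) < R → HasDerivWithinAt φ₁ (dφ₁ r) (Ici 0) r)
    (hφ₂' : ∀ r : ℝ, 0 ≤ r → (r : EReal) < R → HasDerivWithinAt φ₂ (dφ₂ r) (Ici 0) r)
    (hflux₁ : ∀ r : ℝ, 0 < r → (r : EReal) < R →
      HasDerivAt (fun s => ρ s * dφ₁ s) (F₁ r) r)
    (hflux₂ : ∀ r : ℝ, 0 < r → (r : EReal) < R →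
      HasDerivAt (fun s => ρ s * dφ₂ s) (F₂ r) r)
    (hineq₁ : ∀ r : ℝ, 0 < r → (r : EReal) < R →
      κ₁ * ρ r * φ₁ r + A₁ * ρ r * φ₁ r ^ β * Real.exp (-(r ^ 2) / (4 * Du)) ≤ Dv * F₁ r)
    (hineq₂ : ∀ r : ℝ, 0 < r → (r : EReal) < R →
      Dv * F₂ r ≤ κ₂ * ρ r * φ₂ r + A₂ * ρ r * φ₂ r ^ β * Real.exp (-(r ^ 2) / (4 * Du)))
    (hφ₁0 : φ₁ 0 = 1) (hφ₂0 : φ₂ 0 = 1) (hdφ₁0 : dφ₁ 0 = 0) (hdφ₂0 : dφ₂ 0 = 0) :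
    ∀ r : ℝ, 0 < r → (r : EReal) < R → φ₂ r < φ₁ r := by
  intro r hr hrR
  have hR : ∀ t ∈ Icc 0 r, (t : EReal) < R := fun t ht =>
    (EReal.coe_le_coe_iff.2 ht.2).trans_lt hrR
  have hρc : Continuous ρ := by rw [funext hρ]; fun_prop
  have hmono := strictMonoOn_div_of_flux_le hDv hβ hA12 hA2.le hκ12 hsum
    (fun t ht => by rw [hρ]; exact mul_pos (pow_pos ht.1 _) (exp_pos _)) hρc.continuousOn
    (fun t ht => hpos₁ t ht.1.le (hR t (Ioo_subset_Icc_self ht)))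
    (fun t ht => hpos₂ t ht.1 (hR t ht)) (fun t ht => hφ₁' t ht.1 (hR t ht))
    (fun t ht => hφ₂' t ht.1 (hR t ht))
    (fun t ht => hflux₁ t ht.1 (hR t (Ioc_subset_Icc_self ht)))
    (fun t ht => hflux₂ t ht.1 (hR t (Ioc_subset_Icc_self ht)))
    (fun t ht => hineq₁ t ht.1 (hR t (Ioo_subset_Icc_self ht)))
    (fun t ht => hineq₂ t ht.1 (hR t (Ioo_subset_Icc_self ht))) hφ₁0 hφ₂0 hdφ₁0 hdφ₂0
  have h : φ₁ 0 / φ₂ 0 < φ₁ r / φ₂ r := hmono ⟨le_rfl, hr.le⟩ ⟨hr.le, le_rfl⟩ hr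
  rw [hφ₁0, hφ₂0, div_one] at h
  exact (one_lt_div (hpos₂ r hr.le hrR)).1 h

/-- Comparison lemma for super- and subsolutions of the self-similar
profile equation with weight `ρ(r) = r^{N-1} e^{r²/(4Dᵥ)}`. -/
theorem stmt2
    (N : ℕ) (hN : 1 ≤ N) (Du Dv β A₁ A₂ κ₁ κ₂ : ℝ)
    (hDu : 0 < Du) (hDv : 0 < Dv) (hβ : 1 ≤ β)
    (hA12 : A₂ ≤ A₁) (hA2 : 0 < A₂) (hκ12 : κ₂ ≤ κ₁) (hsum : A₂ + κ₂ < A₁ + κ₁)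
    (R : EReal) (hR : 0 < R)
    (ρ : ℝ → ℝ) (hρ : ∀ r : ℝ, ρ r = r ^ (N - 1) * Real.exp (r ^ 2 / (4 * Dv)))
    (φ₁ dφ₁ F₁ φ₂ dφ₂ F₂ : ℝ → ℝ)
    (hpos₁ : ∀ r : ℝ, 0 ≤ r → (r : EReal) < R → 0 < φ₁ r)
    (hpos₂ : ∀ r : ℝ, 0 ≤ r → (r : EReal) < R → 0 < φ₂ r)
    (hφ₁' : ∀ r : ℝ, 0 ≤ r → (r : EReal) < R → HasDerivWithinAt φ₁ (dφ₁ r) (Ici 0) r)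
    (hφ₂' : ∀ r : ℝ, 0 ≤ r → (r : EReal) < R → HasDerivWithinAt φ₂ (dφ₂ r) (Ici 0) r)
    (hflux₁ : ∀ r : ℝ, 0 < r → (r : EReal) < R →
      HasDerivAt (fun s => ρ s * dφ₁ s) (F₁ r) r)
    (hflux₂ : ∀ r : ℝ, 0 < r → (r : EReal) < R →
      HasDerivAt (fun s => ρ s * dφ₂ s) (F₂ r) r)
    (hineq₁ : ∀ r : ℝ, 0 < r → (r : EReal) < R →
      κ₁ * ρ r * φ₁ r + A₁ * ρ r * φ₁ r ^ β * Real.exp (-(r ^ 2) / (4 * Du)) ≤ Dv * F₁ r)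
    (hineq₂ : ∀ r : ℝ, 0 < r → (r : EReal) < R →
      Dv * F₂ r ≤ κ₂ * ρ r * φ₂ r + A₂ * ρ r * φ₂ r ^ β * Real.exp (-(r ^ 2) / (4 * Du)))
    (hφ₁0 : φ₁ 0 = 1) (hφ₂0 : φ₂ 0 = 1) (hdφ₁0 : dφ₁ 0 = 0) (hdφ₂0 : dφ₂ 0 = 0) :
    ∀ r : ℝ, 0 < r → (r : EReal) < R → φ₂ r < φ₁ r :=
  stmt2_general N Du Dv β A₁ A₂ κ₁ κ₂ hDv hβ hA12 hA2 hκ12 hsum R ρ hρ φ₁ dφ₁ F₁ φ₂ dφ₂ F₂ hpos₁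
    hpos₂ hφ₁' hφ₂' hflux₁ hflux₂ hineq₁ hineq₂ hφ₁0 hφ₂0 hdφ₁0 hdφ₂0
end

section
/- Let N ≥ 1 be an integer, M > 0, D_v > 0, and set ρ(r) = r^{N−1} e^{r²/(4D_v)}. Suppose φ : [0,∞) → ℝ is a C² function with φ(0) = 1, φ'(0) = 0 solving D_v (ρ(r) φ'(r))' = M ρ(r) φ(r) on (0,∞). Then φ is increasing, and there exists a constant L > 0 depending only on M, D_v, N such that for all r > 1: φ(r) ≤ L r^{4M} if N = 1, and φ(r) ≤ L r^{2M} if N ≥ 2. -/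
/-!
Integrating the equation from `0`, where `D ρ φ'` vanishes because `φ'(0) = 0` and `ρ` is bounded
near `0`, gives `D ρ(r) φ'(r) = M ∫₀^r ρ φ`. So `φ' ≥ 0` as long as `φ > 0`, hence `φ` is
increasing and `φ ≥ 1`; then `φ' ≤ (M / D) (∫₀^r ρ / ρ(r)) φ`, and Gronwall's inequality turns the
weight bounds `∫₀^r ρ ≤ 2 D ρ(r) / r` (`N ≥ 2`) and `∫₀^r ρ ≤ 4 D ρ(r) / r` (`N = 1`) into growth
`r^{2M}` and `r^{4M}`, while the crude bound `∫₀^r ρ ≤ r ρ(r)` controls `φ(1)`.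
-/

open Real Set Filter Topology

theorem tendsto_mul_deriv_nhdsGT_zero {p q φ dφ : ℝ → ℝ}
    (hp : ContinuousOn p (Icc 0 1)) (hq : ContinuousOn q (Icc 0 1))
    (hφ : ∀ r ∈ Ici (0 : ℝ), HasDerivWithinAt φ (dφ r) (Ici 0) r) (hdφ0 : dφ 0 = 0)
    (hg : ∀ r ∈ Ioi (0 : ℝ), HasDerivAt (fun s => p s * dφ s) (q r) r) :
    Tendsto (fun s => p s * dφ s) (𝓝[>] 0) (𝓝 0) := by
  obtain ⟨P, hP⟩ := isCompact_Icc.exists_bound_of_continuousOn hp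
  obtain ⟨K, hK⟩ := isCompact_Icc.exists_bound_of_continuousOn hq
  have hslope : Tendsto (slope φ 0) (𝓝[>] 0) (𝓝 0) := by
    have := (hasDerivWithinAt_iff_tendsto_slope' self_notMem_Ioi).1 (hφ 0 self_mem_Ici).Ioi_of_Ici
    rwa [hdφ0] at this
  -- by the mean value theorem `dφ` takes the value `slope φ 0 ε` somewhere in `(0, ε)`,
  -- and `p * dφ` is `K`-Lipschitz on `(0, 1]`
  have hbound : ∀ ε ∈ Ioc (0 : ℝ) 1, ‖p ε * dφ ε‖ ≤ P * ‖slope φ 0 ε‖ + K * ε := by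
    rintro ε ⟨hε0, hε1⟩
    obtain ⟨ξ, hξ, hξslope⟩ := exists_hasDerivAt_eq_slope φ dφ hε0
      (fun x hx => (hφ x hx.1).continuousWithinAt.mono Icc_subset_Ici_self)
      (fun x hx => (hφ x hx.1.le).hasDerivAt (Ici_mem_nhds hx.1))
    have hξ_le : ‖p ξ * dφ ξ‖ ≤ P * ‖slope φ 0 ε‖ := by
      rw [norm_mul, hξslope, slope_def_field]
      exact mul_le_mul_of_nonneg_right (hP ξ ⟨hξ.1.le, hξ.2.le.trans hε1⟩) (norm_nonneg _)
    have hLip : ‖p ε * dφ ε - p ξ * dφ ξ‖ ≤ K * ‖ε - ξ‖ :=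
      (convex_Icc ξ ε).norm_image_sub_le_of_norm_hasDerivWithin_le
        (fun x hx => (hg x (hξ.1.trans_le hx.1)).hasDerivWithinAt)
        (fun x hx => hK x ⟨hξ.1.le.trans hx.1, hx.2.trans hε1⟩)
        (left_mem_Icc.2 hξ.2.le) (right_mem_Icc.2 hξ.2.le)
    have hK0 : 0 ≤ K := (norm_nonneg _).trans (hK 0 ⟨le_rfl, zero_le_one⟩)
    have hεξ : ‖ε - ξ‖ ≤ ε := by
      rw [Real.norm_of_nonneg (sub_nonneg.2 hξ.2.le)]
      linarith [hξ.1]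
    calc ‖p ε * dφ ε‖ ≤ ‖p ξ * dφ ξ‖ + ‖p ε * dφ ε - p ξ * dφ ξ‖ := norm_le_insert' _ _
      _ ≤ P * ‖slope φ 0 ε‖ + K * ε :=
        add_le_add hξ_le (hLip.trans (mul_le_mul_of_nonneg_left hεξ hK0))
  refine squeeze_zero_norm' ?_ (a := fun ε => P * ‖slope φ 0 ε‖ + K * ε) ?_
  · filter_upwards [Ioc_mem_nhdsGT zero_lt_one] using hbound
  · simpa using (hslope.norm.const_mul P).add
      ((tendsto_id.mono_left nhdsWithin_le_nhds).const_mul K)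

theorem mul_deriv_eq_integral {p q φ dφ : ℝ → ℝ}
    (hp : ContinuousOn p (Icc 0 1)) (hq : ContinuousOn q (Ici 0))
    (hφ : ∀ r ∈ Ici (0 : ℝ), HasDerivWithinAt φ (dφ r) (Ici 0) r) (hdφ0 : dφ 0 = 0)
    (hg : ∀ r ∈ Ioi (0 : ℝ), HasDerivAt (fun s => p s * dφ s) (q r) r) {r : ℝ} (hr : 0 < r) :
    p r * dφ r = ∫ s in 0..r, q s := by
  rw [intervalIntegral.integral_eq_sub_of_hasDerivAt_of_tendsto hr (fun x hx => hg x hx.1)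
    ((hq.mono Icc_subset_Ici_self).intervalIntegrable_of_Icc hr.le)
    (tendsto_mul_deriv_nhdsGT_zero hp (hq.mono Icc_subset_Ici_self) hφ hdφ0 hg)
    ((hg r hr).continuousAt.tendsto.mono_left nhdsWithin_le_nhds), sub_zero]

theorem monotoneOn_of_mul_deriv_eq_integral {p w φ dφ : ℝ → ℝ}
    (hφ : ∀ r ∈ Ici (0 : ℝ), HasDerivWithinAt φ (dφ r) (Ici 0) r) (hφ0 : 0 < φ 0)
    (hp : ∀ r, 0 < r → 0 < p r) (hw : ∀ r, 0 ≤ r → 0 ≤ w r)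
    (hid : ∀ r, 0 < r → p r * dφ r = ∫ s in 0..r, w s * φ s) : MonotoneOn φ (Ici 0) := by
  have hφc : ContinuousOn φ (Ici 0) := fun r hr => (hφ r hr).continuousWithinAt
  have deriv_nonneg : ∀ r, 0 < r → (∀ s ∈ Icc 0 r, 0 ≤ φ s) → 0 ≤ dφ r := fun r hr hφr =>
    (mul_nonneg_iff_of_pos_left (hp r hr)).1 <| (hid r hr).symm ▸
      intervalIntegral.integral_nonneg hr.le fun s hs => mul_nonneg (hw s hs.1) (hφr s hs)
  have mono : ∀ c, (∀ r ∈ Ioo 0 c, 0 ≤ dφ r) → MonotoneOn φ (Icc 0 c) := fun c hc =>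
    monotoneOn_of_hasDerivWithinAt_nonneg (convex_Icc 0 c) (hφc.mono Icc_subset_Ici_self)
      (fun x hx => by
        rw [interior_Icc] at hx ⊢
        exact ((hφ x hx.1.le).hasDerivAt (Ici_mem_nhds hx.1)).hasDerivWithinAt)
      (by rwa [interior_Icc])
  -- up to a first zero `c` of `φ`, `φ` would be increasing, forcing `φ c ≥ φ 0 > 0`
  have hpos : ∀ r, 0 ≤ r → 0 < φ r := by
    by_contra! hneg
    set A := Ici 0 ∩ φ ⁻¹' Iic 0
    have hA : IsClosed A := hφc.preimage_isClosed_of_isClosed isClosed_Ici isClosed_Iic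
    have hcA : sInf A ∈ A := hA.csInf_mem hneg ⟨0, fun x hx => hx.1⟩
    have hc : 0 < sInf A := hcA.1.lt_of_ne fun h => (not_le.2 hφ0) (h ▸ hcA.2)
    have hbelow : ∀ s ∈ Ico 0 (sInf A), 0 < φ s := fun s hs =>
      lt_of_not_ge fun h => (not_le.2 hs.2) (csInf_le ⟨0, fun x hx => hx.1⟩ ⟨hs.1, h⟩)
    have := mono (sInf A) fun r hr => deriv_nonneg r hr.1 fun s hs =>
      (hbelow s ⟨hs.1, hs.2.trans_lt hr.2⟩).le
    exact (not_le.2 hφ0) ((this ⟨le_rfl, hc.le⟩ ⟨hc.le, le_rfl⟩ hc.le).trans hcA.2)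
  intro a ha b hb hab
  exact mono b (fun r hr => deriv_nonneg r hr.1 fun s hs => (hpos s hs.1).le)
    ⟨ha, hab⟩ ⟨hb, le_rfl⟩ hab

theorem le_mul_exp_sub_of_deriv_le {φ dφ C c : ℝ → ℝ} {a b : ℝ} (hab : a ≤ b)
    (hφ : ContinuousOn φ (Icc a b)) (hdφ : ∀ s ∈ Ioo a b, HasDerivAt φ (dφ s) s)
    (hC : ∀ s ∈ Icc a b, HasDerivAt C (c s) s) (hle : ∀ s ∈ Ioo a b, dφ s ≤ c s * φ s) :
    φ b ≤ φ a * exp (C b - C a) := by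
  have hanti : AntitoneOn (fun s => φ s * exp (-C s)) (Icc a b) := by
    refine antitoneOn_of_hasDerivWithinAt_nonpos (convex_Icc a b)
      (hφ.mul (continuous_exp.comp_continuousOn (ContinuousOn.neg
        fun s hs => (hC s hs).continuousAt.continuousWithinAt)))
      (fun s hs => ?_) (fun s hs => ?_)
      (f' := fun s => dφ s * exp (-C s) + φ s * (exp (-C s) * -c s))
    · rw [interior_Icc] at hs ⊢
      exact ((hdφ s hs).mul (hC s (Ioo_subset_Icc_self hs)).neg.exp).hasDerivWithinAt
    · rw [interior_Icc] at hs
      have : dφ s * exp (-C s) ≤ c s * φ s * exp (-C s) :=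
        mul_le_mul_of_nonneg_right (hle s hs) (exp_pos _).le
      linarith
  have h := mul_le_mul_of_nonneg_right
    (hanti (left_mem_Icc.2 hab) (right_mem_Icc.2 hab) hab) (exp_pos (C b)).le
  simp only [mul_assoc, ← exp_add, neg_add_cancel, exp_zero, mul_one] at h
  rwa [neg_add_eq_sub] at h

theorem le_mul_div_rpow_of_deriv_le {φ dφ : ℝ → ℝ} {k a b : ℝ} (ha : 0 < a) (hab : a ≤ b)
    (hφ : ContinuousOn φ (Icc a b)) (hdφ : ∀ s ∈ Ioo a b, HasDerivAt φ (dφ s) s)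
    (hle : ∀ s ∈ Ioo a b, dφ s ≤ k / s * φ s) : φ b ≤ φ a * (b / a) ^ k := by
  have hlog : ∀ s ∈ Icc a b, HasDerivAt (fun s => k * log s) (k / s) s := fun s hs => by
    simpa [div_eq_mul_inv] using (hasDerivAt_log (ha.trans_le hs.1).ne').const_mul k
  convert le_mul_exp_sub_of_deriv_le hab hφ hdφ hlog hle using 2
  rw [rpow_def_of_pos (div_pos (ha.trans_le hab) ha), log_div (ha.trans_le hab).ne' ha.ne']
  congr 1
  ring

noncomputable def profileWeight (N : ℕ) (D r : ℝ) : ℝ := r ^ (N - 1) * exp (r ^ 2 / (4 * D))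

namespace profileWeight

variable {N : ℕ} {D : ℝ}

@[fun_prop]
theorem continuous : Continuous (profileWeight N D) := by
  unfold profileWeight; fun_prop

theorem pos {r : ℝ} (hr : 0 < r) : 0 < profileWeight N D r := by
  unfold profileWeight; positivity

theorem nonneg {r : ℝ} (hr : 0 ≤ r) : 0 ≤ profileWeight N D r := by
  unfold profileWeight; positivity

theorem monotoneOn (hD : 0 ≤ D) : MonotoneOn (profileWeight N D) (Ici 0) :=
  fun s hs t _ hst => mul_le_mul (pow_le_pow_left₀ hs hst _)
    (exp_le_exp.2 (div_le_div_of_nonneg_right (pow_le_pow_left₀ hs hst 2) (by positivity)))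
    (exp_pos _).le (pow_nonneg (hs.trans hst) _)

theorem integral_le_mul (hD : 0 ≤ D) {r : ℝ} (hr : 0 ≤ r) :
    ∫ s in 0..r, profileWeight N D s ≤ r * profileWeight N D r := by
  calc ∫ s in 0..r, profileWeight N D s ≤ ∫ _ in 0..r, profileWeight N D r :=
        intervalIntegral.integral_mono_on hr (continuous.intervalIntegrable 0 r)
          intervalIntegrable_const fun s hs => monotoneOn hD hs.1 hr hs.2
    _ = r * profileWeight N D r := by simp

-- The derivative of `2 D r^{N-2} e^{r²/4D}` is `ρ(r)` plus `2 D (N - 2) r^{N-3} e^{r²/4D} ≥ 0`.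
theorem integral_le_of_two_le (hN : 2 ≤ N) (hD : 0 < D) {r : ℝ} (hr : 0 < r) :
    ∫ s in 0..r, profileWeight N D s ≤ 2 * D / r * profileWeight N D r := by
  set G : ℝ → ℝ := fun t => 2 * D * (t ^ (N - 2) * exp (t ^ 2 / (4 * D)))
  have hG : ∀ t, HasDerivAt G (2 * D * (((N - 2 : ℕ) : ℝ) * t ^ (N - 2 - 1) * exp (t ^ 2 / (4 * D))
      + t ^ (N - 2) * (exp (t ^ 2 / (4 * D)) * (((2 : ℕ) : ℝ) * t ^ (2 - 1) / (4 * D))))) t :=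
    fun t => ((hasDerivAt_pow _ t).mul ((hasDerivAt_pow 2 t).div_const _).exp).const_mul _
  have hpow : ∀ t : ℝ, t ^ (N - 1) = t ^ (N - 2) * t := fun t => by
    rw [← pow_succ]; congr 1; omega
  have hle := intervalIntegral.integral_le_sub_of_hasDeriv_right_of_le (φ := profileWeight N D)
    hr.le (fun t _ => (hG t).continuousAt.continuousWithinAt) (fun t _ => (hG t).hasDerivWithinAt)
    continuous.integrableOn_Icc fun t ht => by
      have hrest : 0 ≤ 2 * D * (((N - 2 : ℕ) : ℝ) * t ^ (N - 2 - 1) * exp (t ^ 2 / (4 * D))) := by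
        have := ht.1.le; positivity
      have hmain : 2 * D * (t ^ (N - 2) * (exp (t ^ 2 / (4 * D)) *
          (((2 : ℕ) : ℝ) * t ^ (2 - 1) / (4 * D)))) = profileWeight N D t := by
        rw [profileWeight, hpow]; push_cast; field_simp; ring
      rw [mul_add, hmain]
      linarith
  have hG0 : 0 ≤ G 0 := by positivity
  calc ∫ s in 0..r, profileWeight N D s ≤ G r - G 0 := hle
    _ ≤ G r := by linarith
    _ = 2 * D / r * profileWeight N D r := by
      simp only [G, profileWeight, hpow]; field_simp

-- Below `2 √D` the crude bound `r ρ(r)` suffices; above it, the derivative of `4 D e^{r²/4D} / r`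
-- dominates `ρ`, and at `r = 2 √D` this function equals the crude bound.
theorem integral_one_le (hD : 0 < D) {r : ℝ} (hr : 0 < r) :
    ∫ s in 0..r, profileWeight 1 D s ≤ 4 * D / r * profileWeight 1 D r := by
  set a := 2 * √D
  have ha : 0 < a := by positivity
  have ha2 : a ^ 2 = 4 * D := by rw [mul_pow, sq_sqrt hD.le]; ring
  rcases le_or_gt r a with hra | har
  · refine (integral_le_mul hD.le hr.le).trans (mul_le_mul_of_nonneg_right ?_ (nonneg hr.le))
    rw [le_div_iff₀ hr]
    nlinarith
  set G : ℝ → ℝ := fun t => 4 * D / t * exp (t ^ 2 / (4 * D))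
  have hG : ∀ t, t ≠ 0 → HasDerivAt G (exp (t ^ 2 / (4 * D)) * (2 - 4 * D / t ^ 2)) t := by
    intro t ht
    have h := ((hasDerivAt_inv ht).const_mul (4 * D)).mul ((hasDerivAt_pow 2 t).div_const (4 * D)).exp
    refine (h.congr_deriv ?_).congr_of_eventuallyEq (Eventually.of_forall fun x => ?_)
    · have := hD.ne'; push_cast; field_simp; ring
    · simp only [G, Pi.mul_apply, div_eq_mul_inv]
  have hpos : ∀ t ∈ Icc a r, 0 < t := fun t ht => ha.trans_le ht.1
  have htail := intervalIntegral.integral_le_sub_of_hasDeriv_right_of_le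
    (φ := profileWeight 1 D) har.le
    (fun t ht => (hG t (hpos t ht).ne').continuousAt.continuousWithinAt)
    (fun t ht => (hG t (hpos t (Ioo_subset_Icc_self ht)).ne').hasDerivWithinAt)
    continuous.integrableOn_Icc fun t ht => by
      have ht0 := hpos t (Ioo_subset_Icc_self ht)
      have ht2 : 4 * D ≤ t ^ 2 := ha2 ▸ pow_le_pow_left₀ ha.le ht.1.le 2
      have : 4 * D / t ^ 2 ≤ 1 := (div_le_one (pow_pos ht0 2)).2 ht2
      simp only [profileWeight, Nat.sub_self, pow_zero, one_mul]
      exact le_mul_of_one_le_right (exp_pos _).le (by linarith)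
  have hhead : ∫ s in 0..a, profileWeight 1 D s ≤ G a := by
    refine (integral_le_mul hD.le ha.le).trans_eq ?_
    simp only [G, profileWeight, Nat.sub_self, pow_zero, one_mul, ← ha2]
    field_simp
  rw [← intervalIntegral.integral_add_adjacent_intervals (continuous.intervalIntegrable 0 a)
    (continuous.intervalIntegrable a r)]
  calc _ ≤ G a + (G r - G a) := add_le_add hhead htail
    _ = 4 * D / r * profileWeight 1 D r := by simp [G, profileWeight]

end profileWeight

structure IsProfile (N : ℕ) (M D : ℝ) (φ dφ : ℝ → ℝ) : Prop where
  hasDerivWithinAt : ∀ r ∈ Ici (0 : ℝ), HasDerivWithinAt φ (dφ r) (Ici 0) r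
  hasDerivAt_flux : ∀ r ∈ Ioi (0 : ℝ),
    HasDerivAt (fun s => D * (profileWeight N D s * dφ s)) (M * profileWeight N D r * φ r) r
  apply_zero : φ 0 = 1
  deriv_zero : dφ 0 = 0

namespace IsProfile

variable {N : ℕ} {M D : ℝ} {φ dφ : ℝ → ℝ}

theorem continuousOn (h : IsProfile N M D φ dφ) : ContinuousOn φ (Ici 0) :=
  fun r hr => (h.hasDerivWithinAt r hr).continuousWithinAt

theorem hasDerivAt (h : IsProfile N M D φ dφ) {r : ℝ} (hr : 0 < r) : HasDerivAt φ (dφ r) r :=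
  (h.hasDerivWithinAt r hr.le).hasDerivAt (Ici_mem_nhds hr)

theorem flux_eq_integral (h : IsProfile N M D φ dφ) {r : ℝ} (hr : 0 < r) :
    D * profileWeight N D r * dφ r = ∫ s in 0..r, M * profileWeight N D s * φ s :=
  mul_deriv_eq_integral (p := fun s => D * profileWeight N D s)
    (q := fun s => M * profileWeight N D s * φ s) (by fun_prop)
    ((by fun_prop : Continuous fun s => M * profileWeight N D s).continuousOn.mul h.continuousOn)
    h.hasDerivWithinAt h.deriv_zero (by simpa only [mul_assoc] using h.hasDerivAt_flux) hr

theorem monotoneOn (h : IsProfile N M D φ dφ) (hM : 0 ≤ M) (hD : 0 < D) :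
    MonotoneOn φ (Ici 0) :=
  monotoneOn_of_mul_deriv_eq_integral h.hasDerivWithinAt (h.apply_zero ▸ one_pos)
    (fun _ hr => mul_pos hD (profileWeight.pos hr))
    (fun _ hr => mul_nonneg hM (profileWeight.nonneg hr)) fun _ hr => h.flux_eq_integral hr

theorem one_le (h : IsProfile N M D φ dφ) (hM : 0 ≤ M) (hD : 0 < D) {r : ℝ} (hr : 0 ≤ r) :
    1 ≤ φ r :=
  h.apply_zero ▸ h.monotoneOn hM hD self_mem_Ici hr hr

theorem deriv_le (h : IsProfile N M D φ dφ) (hM : 0 ≤ M) (hD : 0 < D) {r β : ℝ} (hr : 0 < r)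
    (hβ : ∫ s in 0..r, profileWeight N D s ≤ β * profileWeight N D r) :
    dφ r ≤ M / D * β * φ r := by
  have hρ := profileWeight.pos (N := N) (D := D) hr
  have hφr := h.one_le hM hD hr.le
  refine le_of_mul_le_mul_left ?_ (mul_pos hD hρ)
  calc D * profileWeight N D r * dφ r = ∫ s in 0..r, M * profileWeight N D s * φ s :=
        h.flux_eq_integral hr
    _ ≤ ∫ s in 0..r, M * φ r * profileWeight N D s :=
      intervalIntegral.integral_mono_on hr.le
        (((by fun_prop : Continuous fun s => M * profileWeight N D s).continuousOn.mul
          (h.continuousOn.mono Icc_subset_Ici_self)).intervalIntegrable_of_Icc hr.le)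
        (profileWeight.continuous.intervalIntegrable 0 r |>.const_mul _) fun s hs =>
          (mul_le_mul_of_nonneg_left (h.monotoneOn hM hD hs.1 hr.le hs.2)
            (mul_nonneg hM (profileWeight.nonneg hs.1))).trans_eq (by ring)
    _ = M * φ r * ∫ s in 0..r, profileWeight N D s := intervalIntegral.integral_const_mul _ _
    _ ≤ M * φ r * (β * profileWeight N D r) :=
      mul_le_mul_of_nonneg_left hβ (mul_nonneg hM (zero_le_one.trans hφr))
    _ = D * profileWeight N D r * (M / D * β * φ r) := by field_simp

theorem le_exp (h : IsProfile N M D φ dφ) (hM : 0 ≤ M) (hD : 0 < D) {r : ℝ} (hr : 0 ≤ r) :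
    φ r ≤ exp (M / (2 * D) * r ^ 2) := by
  have hC : ∀ s ∈ Icc 0 r, HasDerivAt (fun s => M / (2 * D) * s ^ 2) (M / D * s) s :=
    fun s _ => ((hasDerivAt_pow 2 s).const_mul _).congr_deriv (by field_simp; ring)
  simpa [h.apply_zero] using le_mul_exp_sub_of_deriv_le hr
    (h.continuousOn.mono Icc_subset_Ici_self) (fun s hs => h.hasDerivAt hs.1) hC
    fun s hs => h.deriv_le hM hD hs.1 (profileWeight.integral_le_mul hD.le hs.1.le)

theorem le_mul_rpow (h : IsProfile N M D φ dφ) (hM : 0 ≤ M) (hD : 0 < D) {k : ℝ}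
    (hk : ∀ s, 1 < s → ∫ t in 0..s, profileWeight N D t ≤ k / s * profileWeight N D s)
    {r : ℝ} (hr : 1 ≤ r) : φ r ≤ φ 1 * r ^ (M / D * k) := by
  simpa using le_mul_div_rpow_of_deriv_le one_pos hr
    (h.continuousOn.mono fun x hx => zero_le_one.trans hx.1)
    (fun s hs => h.hasDerivAt (one_pos.trans hs.1))
    fun s hs => (h.deriv_le hM hD (one_pos.trans hs.1) (hk s hs.1)).trans_eq (by ring)

end IsProfile

theorem stmt3_general
    (N : ℕ) (M Dv : ℝ) (hM : 0 < M) (hDv : 0 < Dv)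
    (ρ : ℝ → ℝ) (hρ : ∀ r : ℝ, ρ r = r ^ (N - 1) * Real.exp (r ^ 2 / (4 * Dv))) :
    ∃ L > 0, ∀ φ dφ : ℝ → ℝ,
      (∀ r ∈ Ici (0:ℝ), HasDerivWithinAt φ (dφ r) (Ici 0) r) →
      (∀ r ∈ Ioi (0:ℝ), HasDerivAt (fun s => Dv * (ρ s * dφ s)) (M * ρ r * φ r) r) →
      φ 0 = 1 → dφ 0 = 0 →
      MonotoneOn φ (Ici 0) ∧
        ∀ r : ℝ, 1 < r →
          (N = 1 → φ r ≤ L * r ^ (4 * M)) ∧ (2 ≤ N → φ r ≤ L * r ^ (2 * M)) := by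
  obtain rfl : ρ = profileWeight N Dv := funext hρ
  refine ⟨exp (M / (2 * Dv)), exp_pos _, fun φ dφ hφ hflux hφ0 hdφ0 => ?_⟩
  have h : IsProfile N M Dv φ dφ := ⟨hφ, hflux, hφ0, hdφ0⟩
  have growth : ∀ k : ℝ, (∀ s, 1 < s →
      ∫ t in 0..s, profileWeight N Dv t ≤ k * Dv / s * profileWeight N Dv s) →
      ∀ r, 1 ≤ r → φ r ≤ exp (M / (2 * Dv)) * r ^ (k * M) := by
    intro k hk r hr
    calc φ r ≤ φ 1 * r ^ (M / Dv * (k * Dv)) := h.le_mul_rpow hM.le hDv hk hr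
      _ = φ 1 * r ^ (k * M) := by field_simp
      _ ≤ exp (M / (2 * Dv)) * r ^ (k * M) := by
        gcongr
        simpa using h.le_exp hM.le hDv zero_le_one
  refine ⟨h.monotoneOn hM.le hDv, fun r hr => ⟨fun hN => ?_, fun hN => ?_⟩⟩
  · subst hN
    exact growth 4 (fun s hs => profileWeight.integral_one_le hDv (one_pos.trans hs)) r hr.le
  · exact growth 2 (fun s hs => profileWeight.integral_le_of_two_le hN hDv (one_pos.trans hs))
      r hr.le

/-- For the linearized self-similar profile equation
`Dᵥ (ρ φ')' = M ρ φ` with `ρ(r) = r^{N-1} e^{r²/(4Dᵥ)}`, `φ(0)=1`, `φ'(0)=0`,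
the solution is increasing and grows at most algebraically:
`φ(r) ≤ L r^{4M}` for `N = 1` and `φ(r) ≤ L r^{2M}` for `N ≥ 2` (for `r > 1`),
where `L` depends only on `M`, `Dᵥ`, `N`. -/
theorem stmt3
    (N : ℕ) (hN : 1 ≤ N) (M Dv : ℝ) (hM : 0 < M) (hDv : 0 < Dv)
    (ρ : ℝ → ℝ) (hρ : ∀ r : ℝ, ρ r = r ^ (N - 1) * Real.exp (r ^ 2 / (4 * Dv))) :
    ∃ L > 0, ∀ φ dφ : ℝ → ℝ,
      (∀ r ∈ Ici (0:ℝ), HasDerivWithinAt φ (dφ r) (Ici 0) r) →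
      (∀ r ∈ Ioi (0:ℝ), HasDerivAt (fun s => Dv * (ρ s * dφ s)) (M * ρ r * φ r) r) →
      φ 0 = 1 → dφ 0 = 0 →
      MonotoneOn φ (Ici 0) ∧
        ∀ r : ℝ, 1 < r →
          (N = 1 → φ r ≤ L * r ^ (4 * M)) ∧ (2 ≤ N → φ r ≤ L * r ^ (2 * M)) :=
  stmt3_general N M Dv hM hDv ρ hρ
end

section
/- Let A > 0, a > 1 and r₀ ∈ ℝ. There is no twice differentiable function f : (r₀, ∞) → ℝ such that f(r) > 0 and f'(r) > 0 for all r > r₀ and f''(r) ≥ A f(r)^a for all r > r₀. Equivalently: if f is twice differentiable with f, f' > 0 on its maximal interval of existence (r₀, R) and f'' ≥ A f^a there, then R < ∞ and f(r) → ∞ as r → R⁻. -/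
/-!
The proof is an energy argument. Since `f'' > 0`, `f'` increases, so `f` grows at least linearly
and tends to `∞`. Multiplying `f'' ≥ A f^a` by `f' > 0` shows that
`E = f'^2 - 2A/(a+1) f^(a+1)` is nondecreasing, hence `f'^2 ≥ A/(a+1) f^(a+1)` once `f` is large,
that is `f' ≥ K f^b` with `b = (a+1)/2 > 1`. Then `f^(1-b)` is positive and decreases at a rate at
least `(b-1) K`, which is impossible on a half-line.
-/

open Real Set Filter

theorem monotoneOn_of_hasDerivAt_nonneg {D : Set ℝ} (hD : Convex ℝ D) {f f' : ℝ → ℝ}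
    (hf : ∀ x ∈ D, HasDerivAt f (f' x) x) (hf' : ∀ x ∈ interior D, 0 ≤ f' x) :
    MonotoneOn f D :=
  monotoneOn_of_hasDerivWithinAt_nonneg hD (fun x hx => (hf x hx).continuousAt.continuousWithinAt)
    (fun x hx => (hf x (interior_subset hx)).hasDerivWithinAt) hf'

theorem not_forall_deriv_le_neg_of_pos {g g' : ℝ → ℝ} {s C : ℝ} (hC : 0 < C)
    (hg : ∀ r, s < r → HasDerivAt g (g' r) r) (hpos : ∀ r, s < r → 0 < g r) :
    ¬ ∀ r, s < r → g' r ≤ -C := by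
  intro hg'
  have hmono : MonotoneOn (fun r => -g r - C * r) (Ioi s) :=
    monotoneOn_of_hasDerivAt_nonneg (convex_Ioi s)
      (fun r hr => ((hg r hr).neg.sub ((hasDerivAt_id r).const_mul C)))
      (fun r hr => by
        rw [interior_Ioi] at hr
        linarith [hg' r hr])
  set t := s + 1
  have ht : s < t := lt_add_one s
  -- a slope `≤ -C` takes `g` from `g t` down to `0` within time `g t / C`
  have hr : t < t + g t / C := lt_add_of_pos_right t (div_pos (hpos t ht) hC)
  have key := hmono ht (ht.trans hr) hr.le
  have hgr := hpos _ (ht.trans hr)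
  simp only [mul_add, mul_div_cancel₀ _ hC.ne'] at key
  linarith

theorem not_forall_mul_rpow_le_deriv {f f' : ℝ → ℝ} {s K b : ℝ} (hK : 0 < K) (hb : 1 < b)
    (hf : ∀ r, s < r → HasDerivAt f (f' r) r) (hpos : ∀ r, s < r → 0 < f r) :
    ¬ ∀ r, s < r → K * f r ^ b ≤ f' r := by
  intro hf'
  refine not_forall_deriv_le_neg_of_pos (g := fun r => f r ^ (1 - b)) (mul_pos (sub_pos.2 hb) hK)
    (fun r hr => (hf r hr).rpow_const (Or.inl (hpos r hr).ne'))
    (fun r hr => rpow_pos_of_pos (hpos r hr) _) (fun r hr => ?_)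
  have hfb : 0 < f r ^ b := rpow_pos_of_pos (hpos r hr) b
  have hK_le : K ≤ f' r / f r ^ b := (le_div_iff₀ hfb).2 (hf' r hr)
  have hexp : f r ^ (1 - b - 1) = (f r ^ b)⁻¹ := by
    rw [sub_sub_cancel_left, rpow_neg (hpos r hr).le]
  rw [hexp, ← div_eq_mul_inv, mul_div_right_comm]
  nlinarith

theorem tendsto_atTop_of_deriv_pos_of_monotoneOn {f f' : ℝ → ℝ} {s : ℝ}
    (hf : ∀ r, s < r → HasDerivAt f (f' r) r) (hpos : ∀ r, s < r → 0 < f' r)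
    (hmono : MonotoneOn f' (Ioi s)) : Tendsto f atTop atTop := by
  set t := s + 1
  have ht : s < t := lt_add_one s
  have hlin : MonotoneOn (fun r => f r - f' t * r) (Ici t) :=
    monotoneOn_of_hasDerivAt_nonneg (convex_Ici t)
      (fun r hr => (hf r (ht.trans_le hr)).sub ((hasDerivAt_id r).const_mul _))
      (fun r hr => by
        rw [interior_Ici] at hr
        simpa using hmono ht (ht.trans hr) hr.le)
  refine tendsto_atTop_mono' atTop ?_ (tendsto_atTop_add_const_left _ (f t)
    ((tendsto_atTop_add_const_right _ (-t) tendsto_id).const_mul_atTop (hpos t ht)))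
  filter_upwards [eventually_ge_atTop t] with r hr
  have := hlin self_mem_Ici hr hr
  simp only [id] at this ⊢
  linarith

theorem monotoneOn_deriv_sq_sub_mul_rpow {f f' f'' : ℝ → ℝ} {s A a : ℝ} (ha : 0 ≤ a)
    (hf : ∀ r, s < r → HasDerivAt f (f' r) r) (hf' : ∀ r, s < r → HasDerivAt f' (f'' r) r)
    (hpos : ∀ r, s < r → 0 ≤ f' r) (hineq : ∀ r, s < r → A * f r ^ a ≤ f'' r) :
    MonotoneOn (fun r => f' r ^ 2 - 2 * A / (a + 1) * f r ^ (a + 1)) (Ioi s) := by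
  refine monotoneOn_of_hasDerivAt_nonneg (convex_Ioi s)
    (fun r hr => ((hf' r hr).pow 2).sub (((hf r hr).rpow_const (p := a + 1)
      (Or.inr (by linarith))).const_mul _)) (fun r hr => ?_)
  rw [interior_Ioi] at hr
  have hderiv :
      2 * A / (a + 1) * (f' r * (a + 1) * f r ^ (a + 1 - 1)) = 2 * f' r * (A * f r ^ a) := by
    rw [add_sub_cancel_right]
    field_simp
  simp only [hderiv, Nat.cast_ofNat, show (2 - 1 : ℕ) = 1 from rfl, pow_one]
  nlinarith [mul_le_mul_of_nonneg_left (hineq r hr) (hpos r hr)]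

theorem sqrt_mul_rpow_half_le {c x y p : ℝ} (hc : 0 ≤ c) (hx : 0 ≤ x) (hy : 0 ≤ y)
    (h : c * x ^ p ≤ y ^ 2) : √c * x ^ (p / 2) ≤ y := by
  have hsqrt : √(c * x ^ p) = √c * x ^ (p / 2) := by
    rw [sqrt_mul hc, sqrt_eq_rpow (x ^ p), ← rpow_mul hx, mul_one_div]
  rw [← hsqrt, ← sqrt_sq hy]
  exact sqrt_le_sqrt h

/-- Blow-up lemma for second order differential inequalities:
there is no twice differentiable `f : (r₀,∞) → ℝ` with `f > 0`, `f' > 0` and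
`f'' ≥ A f^a` on `(r₀,∞)` when `A > 0` and `a > 1`. -/
theorem stmt5 (A a r₀ : ℝ) (hA : 0 < A) (ha : 1 < a) :
    ¬ ∃ f df ddf : ℝ → ℝ,
        (∀ r : ℝ, r₀ < r → HasDerivAt f (df r) r) ∧
        (∀ r : ℝ, r₀ < r → HasDerivAt df (ddf r) r) ∧
        (∀ r : ℝ, r₀ < r → 0 < f r) ∧
        (∀ r : ℝ, r₀ < r → 0 < df r) ∧
        (∀ r : ℝ, r₀ < r → A * f r ^ a ≤ ddf r) := by
  rintro ⟨f, df, ddf, hf, hdf, hfpos, hdfpos, hineq⟩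
  have hddf : ∀ r, r₀ < r → 0 ≤ ddf r := fun r hr =>
    (mul_pos hA (rpow_pos_of_pos (hfpos r hr) a)).le.trans (hineq r hr)
  have hdf_mono : MonotoneOn df (Ioi r₀) := monotoneOn_of_hasDerivAt_nonneg (convex_Ioi r₀) hdf
    (fun r hr => hddf r (interior_subset hr))
  have hf_top := tendsto_atTop_of_deriv_pos_of_monotoneOn hf hdfpos hdf_mono
  have hE := monotoneOn_deriv_sq_sub_mul_rpow (by linarith) hf hdf
    (fun r hr => (hdfpos r hr).le) hineq
  have hc : 0 < A / (a + 1) := div_pos hA (by linarith)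
  set t := r₀ + 1
  have ht : r₀ < t := lt_add_one r₀
  have hlarge : ∀ᶠ r in atTop, r₀ < r ∧ t ≤ r ∧
      -(df t ^ 2 - 2 * A / (a + 1) * f t ^ (a + 1)) ≤ A / (a + 1) * f r ^ (a + 1) :=
    (eventually_gt_atTop r₀).and <| (eventually_ge_atTop t).and <|
      (((tendsto_rpow_atTop (by linarith)).comp hf_top).const_mul_atTop hc).eventually_ge_atTop _
  obtain ⟨N, hN⟩ := eventually_atTop.1 hlarge
  refine not_forall_mul_rpow_le_deriv (s := N) (sqrt_pos.2 hc) (b := (a + 1) / 2) (by linarith)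
    (fun r hr => hf r (hN r hr.le).1) (fun r hr => hfpos r (hN r hr.le).1) (fun r hr => ?_)
  obtain ⟨hr₀, htr, hbig⟩ := hN r hr.le
  refine sqrt_mul_rpow_half_le hc.le (hfpos r hr₀).le (hdfpos r hr₀).le ?_
  have hEtr := hE ht hr₀ htr
  linear_combination hEtr + hbig
end

section
/- Let N ≥ 1 be an integer, D_u, D_v > 0, κ ∈ ℝ and q > 1, and set ρ(r) = r^{N−1} e^{r²/(4D_v)}. There exists Λ > 0 such that for every λ ≥ Λ there is no positive C² function φ : [0,∞) → ℝ with φ(0) = 1, φ'(0) = 0 solving D_v (ρ φ')' = κ ρ φ + λ ρ e^{−r²/(4D_u)} φ^q on (0,∞); that is, for λ large the local solution blows up at a finite point R_max < ∞. -/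
/-!
Write the equation as `(P φ')' = g` with `P = D_v ρ`, which is bounded on `(0, 1]`. As long as
`φ ≥ 1/2`, the source `g` is nonnegative once `λ` beats `|κ|`, so the flux `P φ'` is nondecreasing;
since `φ'(0) = 0` it cannot be negative, hence `φ` is nondecreasing and `φ ≥ 1` on `[0, 1]`.
On `[1/4, 1]` the source is then at least `μ A^q` wherever `φ ≥ A ≥ 1`, with `μ` linear in `λ`;
integrating twice, `φ` doubles from `A` within a length `∝ (μ A^{q-1})^{-1/2}`. Along `A = 2^k`
these lengths form a geometric series, of total length `≤ 1/2` when `λ` is large, so `φ` would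
be unbounded below `3/4`.
-/

open Real Set

lemma monotoneOn_Icc_of_hasDerivAt_nonneg {f f' : ℝ → ℝ} {a b : ℝ}
    (hc : ContinuousOn f (Icc a b)) (hd : ∀ x ∈ Ioo a b, HasDerivAt f (f' x) x)
    (h0 : ∀ x ∈ Ioo a b, 0 ≤ f' x) : MonotoneOn f (Icc a b) :=
  monotoneOn_of_hasDerivWithinAt_nonneg (convex_Icc a b) hc
    (by simpa only [interior_Icc] using fun x hx => (hd x hx).hasDerivWithinAt)
    (by simpa only [interior_Icc] using h0)

lemma le_of_hasDerivWithinAt_Ici_of_deriv_le {f f' : ℝ → ℝ} {a b d C : ℝ} (hab : a < b)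
    (hf : HasDerivWithinAt f d (Ici a) a) (hc : ContinuousOn f (Icc a b))
    (hd : ∀ x ∈ Ioo a b, HasDerivAt f (f' x) x) (hC : ∀ x ∈ Ioo a b, f' x ≤ C) : d ≤ C := by
  have hmono : MonotoneOn (fun x => C * x - f x) (Icc a b) :=
    monotoneOn_Icc_of_hasDerivAt_nonneg ((continuousOn_const.mul continuousOn_id).sub hc)
      (fun x hx => ((hasDerivAt_id x).const_mul C).sub (hd x hx))
      (fun x hx => by simpa using hC x hx)
  have hslope := (hasDerivWithinAt_iff_tendsto_slope' (s := Ioi a) (lt_irrefl a)).1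
    (hf.mono Ioi_subset_Ici_self)
  refine le_of_tendsto hslope ?_
  filter_upwards [Ioc_mem_nhdsGT hab] with x hx
  have hax := hmono (left_mem_Icc.2 hab.le) (Ioc_subset_Icc_self hx) hx.1.le
  rw [slope_def_field, div_le_iff₀ (sub_pos.2 hx.1)]
  linarith

lemma mul_geom_sum_mem_Icc {θ : ℝ} (hθ0 : 0 ≤ θ) (hθ1 : θ < 1) (k : ℕ) :
    (1 - θ) / 2 * ∑ j ∈ Finset.range k, θ ^ j ∈ Icc 0 (1 / 2) := by
  have hS := geom_sum_Ico_le_of_lt_one (m := 0) (n := k) hθ0 hθ1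
  rw [← Finset.range_eq_Ico, pow_zero, le_div_iff₀ (sub_pos.2 hθ1)] at hS
  have hS0 : 0 ≤ ∑ j ∈ Finset.range k, θ ^ j := Finset.sum_nonneg fun j _ => by positivity
  constructor <;> nlinarith

lemma le_two_rpow_mul_rpow {x q : ℝ} (hq : 1 ≤ q) (hx : 1 / 2 ≤ x) :
    x ≤ 2 ^ (q - 1) * x ^ q := by
  have hx0 : 0 < x := by linarith
  have hhalf : 1 ≤ 2 ^ (q - 1) * x ^ (q - 1) := by
    rw [← mul_rpow zero_le_two hx0.le]
    exact one_le_rpow (by linarith) (by linarith)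
  calc x ≤ 2 ^ (q - 1) * x ^ (q - 1) * x := le_mul_of_one_le_left hx0.le hhalf
    _ = 2 ^ (q - 1) * x ^ q := by rw [rpow_sub_one hx0.ne']; field_simp

lemma two_pow_rpow_mul_sq (q : ℝ) (k : ℕ) :
    ((2 : ℝ) ^ k) ^ q * (((2 : ℝ) ^ (-(q - 1) / 2)) ^ k) ^ 2 = 2 ^ k := by
  rw [← rpow_natCast_mul zero_le_two, ← rpow_mul_natCast zero_le_two,
    ← rpow_mul_natCast zero_le_two, ← rpow_add two_pos, ← rpow_natCast]
  congr 1
  push_cast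
  ring

/-- `(P φ')' = g` on `(0, b]`, with `φ' = dφ` one-sided at `0` and weight `0 < P ≤ P₀`. -/
structure IsFluxSolutionOn (φ dφ P g : ℝ → ℝ) (b P₀ : ℝ) : Prop where
  hasDerivWithinAt : ∀ r ∈ Icc 0 b, HasDerivWithinAt φ (dφ r) (Ici 0) r
  weight_pos : ∀ r ∈ Ioc 0 b, 0 < P r
  weight_le : ∀ r ∈ Ioc 0 b, P r ≤ P₀
  hasDerivAt_flux : ∀ r ∈ Ioc 0 b, HasDerivAt (fun s => P s * dφ s) (g r) r

namespace IsFluxSolutionOn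

variable {φ dφ P g : ℝ → ℝ} {b P₀ : ℝ}

lemma mono (h : IsFluxSolutionOn φ dφ P g b P₀) {c : ℝ} (hcb : c ≤ b) :
    IsFluxSolutionOn φ dφ P g c P₀ where
  hasDerivWithinAt r hr := h.hasDerivWithinAt r ⟨hr.1, hr.2.trans hcb⟩
  weight_pos r hr := h.weight_pos r ⟨hr.1, hr.2.trans hcb⟩
  weight_le r hr := h.weight_le r ⟨hr.1, hr.2.trans hcb⟩
  hasDerivAt_flux r hr := h.hasDerivAt_flux r ⟨hr.1, hr.2.trans hcb⟩

lemma continuousOn (h : IsFluxSolutionOn φ dφ P g b P₀) : ContinuousOn φ (Icc 0 b) :=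
  fun r hr => (h.hasDerivWithinAt r hr).continuousWithinAt.mono fun _ hs => hs.1

lemma hasDerivAt (h : IsFluxSolutionOn φ dφ P g b P₀) {r : ℝ} (hr : r ∈ Ioo 0 b) :
    HasDerivAt φ (dφ r) r :=
  (h.hasDerivWithinAt r (Ioo_subset_Icc_self hr)).hasDerivAt (Ici_mem_nhds hr.1)

lemma continuousOn_flux (h : IsFluxSolutionOn φ dφ P g b P₀) :
    ContinuousOn (fun s => P s * dφ s) (Ioc 0 b) :=
  fun r hr => (h.hasDerivAt_flux r hr).continuousAt.continuousWithinAt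

lemma monotoneOn (h : IsFluxSolutionOn φ dφ P g b P₀) (hF : ∀ r ∈ Ioo 0 b, 0 ≤ P r * dφ r) :
    MonotoneOn φ (Icc 0 b) :=
  monotoneOn_Icc_of_hasDerivAt_nonneg h.continuousOn (fun _ hr => h.hasDerivAt hr)
    fun r hr => nonneg_of_mul_nonneg_right (hF r hr) (h.weight_pos r (Ioo_subset_Ioc_self hr))

/-- A negative flux at `x₀` would stay `≤` its value there on `(0, x₀]`, pushing `φ'` below a
negative constant all the way down to `0`. -/
lemma flux_nonneg (h : IsFluxSolutionOn φ dφ P g b P₀) (hdφ0 : dφ 0 = 0)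
    (hg : ∀ r ∈ Ioo 0 b, 0 ≤ g r) : ∀ r ∈ Ioc 0 b, 0 ≤ P r * dφ r := by
  intro x₀ hx₀
  by_contra! hneg
  have h' := h.mono hx₀.2
  have hP₀ : 0 < P₀ := (h.weight_pos x₀ hx₀).trans_le (h.weight_le x₀ hx₀)
  have hdφ : ∀ x ∈ Ioo 0 x₀, dφ x ≤ P x₀ * dφ x₀ / P₀ := by
    intro x hx
    have hx' : x ∈ Ioc 0 x₀ := Ioo_subset_Ioc_self hx
    have hFx : P x * dφ x ≤ P x₀ * dφ x₀ :=
      monotoneOn_Icc_of_hasDerivAt_nonneg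
        (h'.continuousOn_flux.mono fun y hy => ⟨hx.1.trans_le hy.1, hy.2⟩)
        (fun y hy => h'.hasDerivAt_flux y ⟨hx.1.trans hy.1, hy.2.le⟩)
        (fun y hy => hg y ⟨hx.1.trans hy.1, hy.2.trans_le hx₀.2⟩)
        (left_mem_Icc.2 hx.2.le) (right_mem_Icc.2 hx.2.le) hx.2.le
    have hPx := h'.weight_pos x hx'
    calc dφ x = P x * dφ x / P x := by field_simp
      _ ≤ P x₀ * dφ x₀ / P x := div_le_div_of_nonneg_right hFx hPx.le
      _ ≤ P x₀ * dφ x₀ / P₀ := by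
        rw [div_le_div_iff₀ hPx hP₀]
        exact mul_le_mul_of_nonpos_left (h'.weight_le x hx') hneg.le
  have h0 := le_of_hasDerivWithinAt_Ici_of_deriv_le hx₀.1
    (h'.hasDerivWithinAt 0 (left_mem_Icc.2 hx₀.1.le)) h'.continuousOn
    (fun x hx => h'.hasDerivAt hx) hdφ
  rw [hdφ0] at h0
  exact (div_neg_of_neg_of_pos hneg hP₀).not_ge h0

lemma half_le (h : IsFluxSolutionOn φ dφ P g b P₀) (hφ0 : φ 0 = 1) (hdφ0 : dφ 0 = 0)
    (hg : ∀ r ∈ Ioc 0 b, 1 / 2 ≤ φ r → 0 ≤ g r) : ∀ r ∈ Icc 0 b, 1 / 2 ≤ φ r := by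
  by_contra! ⟨r, hr, hφr⟩
  -- before the first point `r₀` where `φ ≤ 1/2`, `g ≥ 0`; so `φ` increases up to `r₀`
  obtain ⟨r₀, ⟨hr₀, hφr₀⟩, hleast⟩ :=
    (isCompact_Icc.of_isClosed_subset
      (h.continuousOn.preimage_isClosed_of_isClosed isClosed_Icc (isClosed_Iic (a := 1 / 2)))
      inter_subset_left).exists_isLeast
      ⟨r, mem_inter hr hφr.le⟩
  have h' := h.mono hr₀.2
  have hhalf : ∀ s ∈ Ioo 0 r₀, 1 / 2 ≤ φ s := fun s hs => by
    by_contra! hs'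
    exact (hleast ⟨⟨hs.1.le, hs.2.le.trans hr₀.2⟩, hs'.le⟩).not_gt hs.2
  have hF := h'.flux_nonneg hdφ0 fun s hs => hg s ⟨hs.1, hs.2.le.trans hr₀.2⟩ (hhalf s hs)
  have h1 := h'.monotoneOn (fun s hs => hF s (Ioo_subset_Ioc_self hs))
    (left_mem_Icc.2 hr₀.1) (right_mem_Icc.2 hr₀.1) hr₀.1
  simp only [mem_preimage, mem_Iic] at hφr₀
  linarith

lemma flux_nonneg_of_source_nonneg_of_half_le (h : IsFluxSolutionOn φ dφ P g b P₀) (hφ0 : φ 0 = 1)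
    (hdφ0 : dφ 0 = 0) (hg : ∀ r ∈ Ioc 0 b, 1 / 2 ≤ φ r → 0 ≤ g r) :
    ∀ r ∈ Ioc 0 b, 0 ≤ P r * dφ r :=
  h.flux_nonneg hdφ0 fun r hr =>
    hg r (Ioo_subset_Ioc_self hr) (h.half_le hφ0 hdφ0 hg r (Ioo_subset_Icc_self hr))

lemma add_mul_sq_le (h : IsFluxSolutionOn φ dφ P g b P₀) {a c L : ℝ} (ha : 0 < a) (hac : a ≤ c)
    (hcb : c ≤ b) (hFa : 0 ≤ P a * dφ a) (hL : 0 ≤ L) (hg : ∀ r ∈ Ioo a c, L ≤ g r) :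
    φ a + L * (c - a) ^ 2 / (2 * P₀) ≤ φ c := by
  have h' := h.mono hcb
  have hF : ∀ r ∈ Icc a c, L * (r - a) ≤ P r * dφ r := by
    intro r hr
    have hmono := monotoneOn_Icc_of_hasDerivAt_nonneg (f := fun s => P s * dφ s - L * (s - a))
      ((h'.continuousOn_flux.mono fun s hs => ⟨ha.trans_le hs.1, hs.2.trans hr.2⟩).sub
        (by fun_prop))
      (fun s hs => (h'.hasDerivAt_flux s ⟨ha.trans hs.1, hs.2.le.trans hr.2⟩).sub
        (((hasDerivAt_id s).sub_const a).const_mul L))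
      (fun s hs => by simpa using hg s ⟨hs.1, hs.2.trans_le hr.2⟩)
      (left_mem_Icc.2 hr.1) (right_mem_Icc.2 hr.1) hr.1
    simp only [sub_self, mul_zero, sub_zero] at hmono
    linarith
  have hdφ : ∀ r ∈ Ioo a c, L * (r - a) / P₀ ≤ dφ r := by
    intro r hr
    have hr' : r ∈ Ioc 0 c := ⟨ha.trans hr.1, hr.2.le⟩
    have hPr := h'.weight_pos r hr'
    calc L * (r - a) / P₀ ≤ L * (r - a) / P r :=
          div_le_div_of_nonneg_left (mul_nonneg hL (sub_nonneg.2 hr.1.le)) hPr (h'.weight_le r hr')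
      _ ≤ P r * dφ r / P r := div_le_div_of_nonneg_right (hF r (Ioo_subset_Icc_self hr)) hPr.le
      _ = dφ r := by field_simp
  have hmono := monotoneOn_Icc_of_hasDerivAt_nonneg
    (f := fun s => φ s - L * (s - a) ^ 2 / (2 * P₀)) (f' := fun s => dφ s - L * (s - a) / P₀)
    ((h'.continuousOn.mono (Icc_subset_Icc ha.le le_rfl)).sub (by fun_prop))
    (fun s hs => ((h'.hasDerivAt ⟨ha.trans hs.1, hs.2⟩).sub
      ((((hasDerivAt_id s).sub_const a).pow 2).const_mul L |>.div_const (2 * P₀))).congr_deriv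
        (by simp only [id, Nat.cast_ofNat]; ring))
    (fun s hs => sub_nonneg.2 (hdφ s hs))
    (left_mem_Icc.2 hac) (right_mem_Icc.2 hac) hac
  simp only [sub_self, ne_eq, OfNat.ofNat_ne_zero, not_false_eq_true, zero_pow, mul_zero,
    zero_div, sub_zero] at hmono
  linarith

theorem lt_of_mul_rpow_le_source (h : IsFluxSolutionOn φ dφ P g 1 P₀) {q μ : ℝ} (hq : 1 < q)
    (hφ0 : φ 0 = 1) (hdφ0 : dφ 0 = 0) (hg : ∀ r ∈ Ioc 0 1, 1 / 2 ≤ φ r → 0 ≤ g r)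
    (hgμ : ∀ r ∈ Icc (1 / 4) 1, ∀ A, 1 ≤ A → A ≤ φ r → μ * A ^ q ≤ g r) :
    μ < 8 * P₀ / (1 - 2 ^ (-(q - 1) / 2)) ^ 2 := by
  by_contra! hμ
  -- `θ² 2^q = 2`, so a step of length `∝ θ^k` at height `2^k` gains another `2^k`
  set θ : ℝ := 2 ^ (-(q - 1) / 2)
  have hθ0 : 0 < θ := by positivity
  have hθ1 : θ < 1 := rpow_lt_one_of_one_lt_of_neg one_lt_two (by linarith)
  have hP₀ : 0 < P₀ := (h.weight_pos 1 ⟨one_pos, le_rfl⟩).trans_le (h.weight_le 1 ⟨one_pos, le_rfl⟩)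
  have hμ0 : 0 ≤ μ := le_trans (by positivity) hμ
  have hμ1 : 1 ≤ μ * ((1 - θ) / 2) ^ 2 / (2 * P₀) := by
    rw [div_le_iff₀ (pow_pos (sub_pos.2 hθ1) 2)] at hμ
    rw [one_le_div₀ (by positivity)]
    linarith
  have hF := h.flux_nonneg_of_source_nonneg_of_half_le hφ0 hdφ0 hg
  have hmono := h.monotoneOn fun r hr => hF r (Ioo_subset_Ioc_self hr)
  set a : ℕ → ℝ := fun k => 1 / 4 + (1 - θ) / 2 * ∑ j ∈ Finset.range k, θ ^ j with ha
  have ha_mem : ∀ k, a k ∈ Icc (1 / 4) (3 / 4) := fun k => by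
    obtain ⟨h0, h1⟩ := mul_geom_sum_mem_Icc hθ0.le hθ1 k
    simp only [ha, mem_Icc]
    constructor <;> linarith
  have hstep : ∀ k : ℕ, 2 ^ k ≤ φ (a k) → 2 ^ (k + 1) ≤ φ (a (k + 1)) := by
    intro k hk
    obtain ⟨hk₁, hk₂⟩ := ha_mem k
    obtain ⟨hk₁', hk₂'⟩ := ha_mem (k + 1)
    have hlen : a (k + 1) - a k = (1 - θ) / 2 * θ ^ k := by
      simp only [ha, Finset.sum_range_succ]; ring
    have hle : a k ≤ a (k + 1) := by
      have : 0 ≤ (1 - θ) / 2 * θ ^ k := mul_nonneg (by linarith) (by positivity)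
      linarith
    have hA : ∀ r ∈ Ioo (a k) (a (k + 1)), μ * ((2 : ℝ) ^ k) ^ q ≤ g r := fun r hr =>
      hgμ r ⟨by linarith [hr.1], by linarith [hr.2]⟩ _ (one_le_pow₀ one_le_two)
        (hk.trans (hmono ⟨by linarith, by linarith⟩ ⟨by linarith [hr.1], by linarith [hr.2]⟩
          hr.1.le))
    have hgain := h.add_mul_sq_le (by linarith) hle (by linarith)
      (hF _ ⟨by linarith, by linarith⟩) (mul_nonneg hμ0 (by positivity)) hA
    have hinc : μ * ((2 : ℝ) ^ k) ^ q * (a (k + 1) - a k) ^ 2 / (2 * P₀)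
        = μ * ((1 - θ) / 2) ^ 2 / (2 * P₀) * 2 ^ k :=
      calc _ = μ * ((1 - θ) / 2) ^ 2 / (2 * P₀) * (((2 : ℝ) ^ k) ^ q * (θ ^ k) ^ 2) := by
            rw [hlen]; ring
        _ = _ := by rw [two_pow_rpow_mul_sq q k]
    have h2k : (2 : ℝ) ^ k ≤ μ * ((1 - θ) / 2) ^ 2 / (2 * P₀) * 2 ^ k :=
      le_mul_of_one_le_left (by positivity) hμ1
    rw [pow_succ]
    linarith
  have hdouble : ∀ k : ℕ, 2 ^ k ≤ φ (a k) := fun k => by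
    induction k with
    | zero =>
      simpa [a, hφ0] using hmono ⟨le_rfl, zero_le_one⟩ ⟨by norm_num, by norm_num⟩
        (by norm_num : (0 : ℝ) ≤ 1 / 4)
    | succ k ih => exact hstep k ih
  obtain ⟨k, hk⟩ := pow_unbounded_of_one_lt (φ 1) one_lt_two
  obtain ⟨hk₁, hk₂⟩ := ha_mem k
  exact hk.not_ge ((hdouble k).trans
    (hmono ⟨by linarith, by linarith⟩ ⟨zero_le_one, le_rfl⟩ (by linarith)))

end IsFluxSolutionOn

lemma rpow_mul_le_source {κ lam e w ρ x q : ℝ} (hq : 1 ≤ q) (hlam : 0 ≤ lam) (hew : e ≤ w)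
    (hρ : 0 ≤ ρ) (hx : 1 / 2 ≤ x) :
    (lam * e - 2 ^ (q - 1) * |κ|) * ρ * x ^ q ≤ κ * ρ * x + lam * ρ * w * x ^ q := by
  have hρx : 0 ≤ ρ * x := mul_nonneg hρ (by linarith)
  have hρxq : 0 ≤ ρ * x ^ q := mul_nonneg hρ (rpow_nonneg (by linarith) q)
  have hκ : -|κ| * (ρ * x) ≤ κ * (ρ * x) := mul_le_mul_of_nonneg_right (neg_abs_le κ) hρx
  have hx' : |κ| * ρ * x ≤ |κ| * ρ * (2 ^ (q - 1) * x ^ q) :=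
    mul_le_mul_of_nonneg_left (le_two_rpow_mul_rpow hq hx) (mul_nonneg (abs_nonneg κ) hρ)
  have hw : lam * e * (ρ * x ^ q) ≤ lam * w * (ρ * x ^ q) :=
    mul_le_mul_of_nonneg_right (mul_le_mul_of_nonneg_left hew hlam) hρxq
  linarith

lemma pow_mul_exp_sq_div_le {n : ℕ} {D r : ℝ} (hD : 0 ≤ D) (hr : r ∈ Icc 0 1) :
    r ^ n * exp (r ^ 2 / (4 * D)) ≤ exp (1 / (4 * D)) :=
  calc r ^ n * exp (r ^ 2 / (4 * D)) ≤ 1 * exp (1 / (4 * D)) := by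
        gcongr
        · exact pow_le_one₀ hr.1 hr.2
        · exact pow_le_one₀ hr.1 hr.2
    _ = exp (1 / (4 * D)) := one_mul _

lemma pow_le_pow_mul_exp_sq_div {n : ℕ} {D r : ℝ} (hD : 0 ≤ D) (hr : 1 / 4 ≤ r) :
    (1 / 4) ^ n ≤ r ^ n * exp (r ^ 2 / (4 * D)) :=
  calc ((1 : ℝ) / 4) ^ n = (1 / 4) ^ n * 1 := (mul_one _).symm
    _ ≤ r ^ n * exp (r ^ 2 / (4 * D)) := by
        gcongr
        exact one_le_exp (by positivity)

lemma exp_neg_div_le_exp_neg_sq_div {D r : ℝ} (hD : 0 ≤ D) (hr : r ∈ Icc 0 1) :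
    exp (-1 / (4 * D)) ≤ exp (-(r ^ 2) / (4 * D)) := by
  gcongr
  exact pow_le_one₀ hr.1 hr.2

lemma isFluxSolutionOn_of_profile {N : ℕ} {Dv : ℝ} (hDv : 0 < Dv) {ρ φ dφ g : ℝ → ℝ}
    (hρ : ∀ r, ρ r = r ^ (N - 1) * exp (r ^ 2 / (4 * Dv)))
    (hφ : ∀ r ∈ Ici (0 : ℝ), HasDerivWithinAt φ (dφ r) (Ici 0) r)
    (hF : ∀ r ∈ Ioi (0 : ℝ), HasDerivAt (fun s => Dv * (ρ s * dφ s)) (g r) r) :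
    IsFluxSolutionOn φ dφ (fun r => Dv * ρ r) g 1 (Dv * exp (1 / (4 * Dv))) where
  hasDerivWithinAt r hr := hφ r hr.1
  weight_pos r hr := by
    have := hr.1
    rw [hρ]
    positivity
  weight_le r hr := by
    rw [hρ]
    exact mul_le_mul_of_nonneg_left (pow_mul_exp_sq_div_le hDv.le (Ioc_subset_Icc_self hr)) hDv.le
  hasDerivAt_flux r hr := by simpa only [mul_assoc] using hF r hr.1

theorem stmt6_general
    (N : ℕ) (Du Dv κ q : ℝ)
    (hDu : 0 < Du) (hDv : 0 < Dv) (hq : 1 < q)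
    (ρ : ℝ → ℝ) (hρ : ∀ r : ℝ, ρ r = r ^ (N - 1) * Real.exp (r ^ 2 / (4 * Dv))) :
    ∃ Λ > 0, ∀ lam : ℝ, Λ ≤ lam →
      ¬ ∃ φ dφ : ℝ → ℝ,
          (∀ r ∈ Ici (0:ℝ), 0 < φ r) ∧
          (∀ r ∈ Ici (0:ℝ), HasDerivWithinAt φ (dφ r) (Ici 0) r) ∧
          (∀ r ∈ Ioi (0:ℝ), HasDerivAt (fun s => Dv * (ρ s * dφ s))
            (κ * ρ r * φ r + lam * ρ r * Real.exp (-(r ^ 2) / (4 * Du)) * φ r ^ q) r) ∧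
          φ 0 = 1 ∧ dφ 0 = 0 := by
  set θ : ℝ := 2 ^ (-(q - 1) / 2)
  set e := exp (-1 / (4 * Du))
  set M := exp (1 / (4 * Dv))
  set m : ℝ := (1 / 4) ^ (N - 1)
  have hθ : 0 < (1 - θ) ^ 2 :=
    pow_pos (sub_pos.2 (rpow_lt_one_of_one_lt_of_neg one_lt_two (by linarith))) 2
  have hB : 0 < 8 * (Dv * M) / (1 - θ) ^ 2 / m := by positivity
  refine ⟨(2 ^ (q - 1) * |κ| + 8 * (Dv * M) / (1 - θ) ^ 2 / m) / e, by positivity,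
    fun lam hlam => ?_⟩
  rintro ⟨φ, dφ, -, hφd, hF, hφ0, hdφ0⟩
  rw [div_le_iff₀ (exp_pos _)] at hlam
  set c := lam * e - 2 ^ (q - 1) * |κ|
  have hcoef : 8 * (Dv * M) / (1 - θ) ^ 2 ≤ c * m := by
    rw [← div_le_iff₀ (by positivity)]
    linarith
  have hc0 : 0 ≤ c := by linarith
  have hlam0 : 0 ≤ lam :=
    nonneg_of_mul_nonneg_left (hc0.trans (sub_le_self _ (by positivity))) (exp_pos _)
  have hρ0 : ∀ r, 0 ≤ r → 0 ≤ ρ r := fun r hr => by rw [hρ]; positivity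
  refine ((isFluxSolutionOn_of_profile hDv hρ hφd hF).lt_of_mul_rpow_le_source hq hφ0 hdφ0
    (fun r hr hφr => ?_) (fun r hr A hA hAφ => ?_)).not_ge hcoef
  · have hr0 : r ∈ Icc 0 1 := Ioc_subset_Icc_self hr
    exact (mul_nonneg (mul_nonneg hc0 (hρ0 r hr0.1)) (rpow_nonneg (by linarith) q)).trans
      (rpow_mul_le_source hq.le hlam0 (exp_neg_div_le_exp_neg_sq_div hDu.le hr0) (hρ0 r hr0.1) hφr)
  · have hr0 : r ∈ Icc 0 1 := ⟨by linarith [hr.1], hr.2⟩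
    have hm : m ≤ ρ r := by rw [hρ]; exact pow_le_pow_mul_exp_sq_div hDv.le hr.1
    have := hρ0 r hr0.1
    calc c * m * A ^ q ≤ c * ρ r * φ r ^ q := by gcongr
      _ ≤ _ := rpow_mul_le_source hq.le hlam0 (exp_neg_div_le_exp_neg_sq_div hDu.le hr0)
        (hρ0 r hr0.1) (by linarith)

/-- For the self-similar profile equation
`Dᵥ (ρ φ')' = κ ρ φ + λ ρ e^{-r²/(4Dᵤ)} φ^q`, `ρ(r) = r^{N-1} e^{r²/(4Dᵥ)}`,
`φ(0)=1`, `φ'(0)=0`, `q > 1`: there exists `Λ > 0` such that for every `λ ≥ Λ`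
there is no positive C² solution on all of `[0,∞)` (the local solution blows up
at a finite point). -/
theorem stmt6
    (N : ℕ) (hN : 1 ≤ N) (Du Dv κ q : ℝ)
    (hDu : 0 < Du) (hDv : 0 < Dv) (hq : 1 < q)
    (ρ : ℝ → ℝ) (hρ : ∀ r : ℝ, ρ r = r ^ (N - 1) * Real.exp (r ^ 2 / (4 * Dv))) :
    ∃ Λ > 0, ∀ lam : ℝ, Λ ≤ lam →
      ¬ ∃ φ dφ : ℝ → ℝ,
          (∀ r ∈ Ici (0:ℝ), 0 < φ r) ∧
          (∀ r ∈ Ici (0:ℝ), HasDerivWithinAt φ (dφ r) (Ici 0) r) ∧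
          (∀ r ∈ Ioi (0:ℝ), HasDerivAt (fun s => Dv * (ρ s * dφ s))
            (κ * ρ r * φ r + lam * ρ r * Real.exp (-(r ^ 2) / (4 * Du)) * φ r ^ q) r) ∧
          φ 0 = 1 ∧ dφ 0 = 0 :=
  stmt6_general N Du Dv κ q hDu hDv hq ρ hρ
end

section
/- Let N ≥ 1 be an integer, D_u, D_v > 0, q > 1, κ < 0, and set σ = 1/(4 D_u (q−1)). Suppose 0 < λ < 2 N σ D_v − κ, and let θ : [0,R) → ℝ be a positive C² solution of D_v θ'' + (4σ D_v + 1/2) r θ' + D_v (N−1) θ'/r + (4σ² D_v + σ) r² θ + (2 N σ D_v − κ) θ = λ θ^q on (0,R), with θ(0) = 1 and θ'(0) = 0. Then θ'(r) < 0 for all r ∈ (0,R); that is, θ is strictly decreasing on [0,R). -/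
open Real Set Filter Topology

/-! With `ρ(r) = r ^ (N - 1) * exp ((2σ + 1/(4Dᵥ)) r²)` and
`F = λ θ^q - (4σ²Dᵥ + σ) r² θ - (2NσDᵥ - κ) θ`, the equation reads `(ρ θ')' = ρ F / Dᵥ`.
Since `ρ θ'` vanishes at `0`, `θ'(r) < 0` as soon as `F < 0` on `(0, r)`. Near `0` this holds
by continuity, because `F(0) = λ - (2NσDᵥ - κ) < 0`; and while `θ' < 0` on `(0, r)` we have
`θ ≤ θ(0) = 1` there, hence `θ^q ≤ θ` and again `F < 0`. So the first point where `θ' ≥ 0`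
cannot exist. -/

theorem strictAntiOn_Icc_of_hasDerivAt_neg {f f' : ℝ → ℝ} {x y : ℝ}
    (hf : ContinuousOn f (Icc x y)) (hf' : ∀ s ∈ Ioo x y, HasDerivAt f (f' s) s)
    (hneg : ∀ s ∈ Ioo x y, f' s < 0) : StrictAntiOn f (Icc x y) :=
  strictAntiOn_of_hasDerivWithinAt_neg (convex_Icc x y) hf
    (by simpa only [interior_Icc] using fun s hs => (hf' s hs).hasDerivWithinAt)
    (by simpa only [interior_Icc] using hneg)

theorem strictAntiOn_Icc_of_hasDerivWithinAt_Ici_neg {f f' : ℝ → ℝ} {x y : ℝ} (hx : 0 ≤ x)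
    (hf : ∀ s ∈ Icc x y, HasDerivWithinAt f (f' s) (Ici 0) s)
    (hneg : ∀ s ∈ Ioo x y, f' s < 0) : StrictAntiOn f (Icc x y) :=
  strictAntiOn_Icc_of_hasDerivAt_neg
    (fun s hs => (hf s hs).continuousWithinAt.mono fun _ ht => hx.trans ht.1)
    (fun s hs => (hf s (Ioo_subset_Icc_self hs)).hasDerivAt (Ici_mem_nhds (hx.trans_lt hs.1)))
    hneg

theorem forall_mem_Ioc_neg_of_forall_mem_Ioo_neg {f : ℝ → ℝ} {b : ℝ}
    (hf : ContinuousOn f (Ioc 0 b)) (hstart : ∀ᶠ x in 𝓝[>] 0, f x < 0)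
    (hstep : ∀ x ∈ Ioc 0 b, (∀ y ∈ Ioo 0 x, f y < 0) → f x < 0) :
    ∀ x ∈ Ioc 0 b, f x < 0 := by
  obtain ⟨δ, hδ, hδneg⟩ := mem_nhdsGT_iff_exists_Ioo_subset.1 hstart
  set B := Icc δ b ∩ f ⁻¹' Ici 0
  have hB : ∀ x ∈ Ioc 0 b, 0 ≤ f x → x ∈ B := fun x hx hfx =>
    ⟨⟨not_lt.1 fun hxδ => (hδneg ⟨hx.1, hxδ⟩ : f x < 0).not_ge hfx, hx.2⟩, hfx⟩
  have hBbdd : BddBelow B := ⟨δ, fun _ hy => hy.1.1⟩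
  by_contra! ⟨x, hx, hfx⟩
  have hm : sInf B ∈ B :=
    ((hf.mono (Icc_subset_Ioc hδ le_rfl)).preimage_isClosed_of_isClosed isClosed_Icc
      isClosed_Ici).csInf_mem ⟨x, hB x hx hfx⟩ hBbdd
  refine (hstep _ ⟨lt_of_lt_of_le hδ hm.1.1, hm.1.2⟩ fun y hy => ?_).not_ge hm.2
  by_contra! hfy
  exact (csInf_le hBbdd (hB y ⟨hy.1, hy.2.le.trans hm.1.2⟩ hfy)).not_gt hy.2

theorem hasDerivAt_pow_mul_exp_mul_sq_mul {u u' : ℝ → ℝ} {r : ℝ} (n : ℕ) (a : ℝ) (hr : r ≠ 0)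
    (hu : HasDerivAt u (u' r) r) :
    HasDerivAt (fun x => x ^ n * exp (a * x ^ 2) * u x)
      (r ^ n * exp (a * r ^ 2) * (u' r + (2 * a * r + n / r) * u r)) r := by
  have hweight : HasDerivAt (fun x => x ^ n * exp (a * x ^ 2))
      (n * r ^ (n - 1) * exp (a * r ^ 2) + r ^ n * (exp (a * r ^ 2) * (a * (2 * r)))) r :=
    (hasDerivAt_pow n r).mul (by simpa using ((hasDerivAt_pow 2 r).const_mul a).exp)
  have hpow : (n : ℝ) * r ^ (n - 1) = n / r * r ^ n := by
    cases n with
    | zero => simp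
    | succ k => field_simp; simp [pow_succ]
  refine (hweight.mul hu).congr_deriv ?_
  rw [hpow]
  ring

theorem neg_of_hasDerivAt_pow_mul_exp_mul_sq_mul_neg {u f' : ℝ → ℝ} {r : ℝ} (n : ℕ) (a : ℝ)
    (hr : 0 < r) (hu0 : u 0 = 0) (hu : ContinuousOn u (Icc 0 r))
    (hflux : ∀ s ∈ Ioo 0 r, HasDerivAt (fun x => x ^ n * exp (a * x ^ 2) * u x) (f' s) s)
    (hneg : ∀ s ∈ Ioo 0 r, f' s < 0) : u r < 0 := by
  have hanti := strictAntiOn_Icc_of_hasDerivAt_neg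
    ((by fun_prop : Continuous fun x : ℝ => x ^ n * exp (a * x ^ 2)).continuousOn.mul hu)
    hflux hneg
  have hlt : r ^ n * exp (a * r ^ 2) * u r < 0 := by
    simpa [hu0] using hanti (left_mem_Icc.2 hr.le) (right_mem_Icc.2 hr.le) hr
  exact neg_of_mul_neg_right hlt (by positivity)

theorem mul_rpow_sub_mul_sub_mul_neg {lam C c q t : ℝ} (hlam : 0 ≤ lam) (hC : lam < C)
    (hq : 1 ≤ q) (hc : 0 ≤ c) (ht : 0 < t) (ht1 : t ≤ 1) : lam * t ^ q - c * t - C * t < 0 := by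
  have : t ^ q ≤ t := by simpa using rpow_le_rpow_of_exponent_ge ht ht1 hq
  nlinarith [mul_le_mul_of_nonneg_left this hlam]

section Profile

variable {N : ℕ} {Dv σ C lam q b : ℝ} {θ dθ ddθ : ℝ → ℝ}

theorem hasDerivAt_profile_flux (hN : 1 ≤ N) (hDv : Dv ≠ 0) {r : ℝ} (hr : 0 < r)
    (hdθ : HasDerivAt dθ (ddθ r) r)
    (hODE : Dv * ddθ r + (4 * σ * Dv + 1/2) * r * dθ r + Dv * ((N : ℝ) - 1) * dθ r / r
        + (4 * σ ^ 2 * Dv + σ) * r ^ 2 * θ r + C * θ r = lam * θ r ^ q) :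
    HasDerivAt (fun x => x ^ (N - 1) * exp ((2 * σ + 1 / (4 * Dv)) * x ^ 2) * dθ x)
      (r ^ (N - 1) * exp ((2 * σ + 1 / (4 * Dv)) * r ^ 2) *
        ((lam * θ r ^ q - (4 * σ ^ 2 * Dv + σ) * r ^ 2 * θ r - C * θ r) / Dv)) r := by
  refine (hasDerivAt_pow_mul_exp_mul_sq_mul (N - 1) _ hr.ne' hdθ).congr_deriv ?_
  rw [Nat.cast_pred hN]
  congr 1
  rw [eq_div_iff hDv]
  field_simp at hODE ⊢
  linear_combination 2 * hODE

theorem profile_deriv_neg_of_forcing_neg (hN : 1 ≤ N) (hDv : 0 < Dv)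
    (hdθ : ∀ r ∈ Icc 0 b, HasDerivWithinAt dθ (ddθ r) (Ici 0) r)
    (hODE : ∀ r ∈ Ioc 0 b,
      Dv * ddθ r + (4 * σ * Dv + 1/2) * r * dθ r + Dv * ((N : ℝ) - 1) * dθ r / r
        + (4 * σ ^ 2 * Dv + σ) * r ^ 2 * θ r + C * θ r = lam * θ r ^ q)
    (hdθ0 : dθ 0 = 0) {r : ℝ} (hr : r ∈ Ioc 0 b)
    (hF : ∀ s ∈ Ioo 0 r, lam * θ s ^ q - (4 * σ ^ 2 * Dv + σ) * s ^ 2 * θ s - C * θ s < 0) :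
    dθ r < 0 :=
  neg_of_hasDerivAt_pow_mul_exp_mul_sq_mul_neg (N - 1) _ hr.1 hdθ0
    (fun s hs => (hdθ s ⟨hs.1, hs.2.trans hr.2⟩).continuousWithinAt.mono Icc_subset_Ici_self)
    (fun s hs => hasDerivAt_profile_flux hN hDv.ne' hs.1
      ((hdθ s ⟨hs.1.le, hs.2.le.trans hr.2⟩).hasDerivAt (Ici_mem_nhds hs.1))
      (hODE s ⟨hs.1, hs.2.le.trans hr.2⟩))
    (fun s hs => mul_neg_of_pos_of_neg (by have := hs.1; positivity)
      (div_neg_of_neg_of_pos (hF s hs) hDv))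

theorem profile_deriv_neg (hN : 1 ≤ N) (hDv : 0 < Dv) (hσ : 0 ≤ σ) (hlam : 0 ≤ lam)
    (hC : lam < C) (hq : 1 ≤ q) (hpos : ∀ r ∈ Icc 0 b, 0 < θ r)
    (hθ : ∀ r ∈ Icc 0 b, HasDerivWithinAt θ (dθ r) (Ici 0) r)
    (hdθ : ∀ r ∈ Icc 0 b, HasDerivWithinAt dθ (ddθ r) (Ici 0) r)
    (hODE : ∀ r ∈ Ioc 0 b,
      Dv * ddθ r + (4 * σ * Dv + 1/2) * r * dθ r + Dv * ((N : ℝ) - 1) * dθ r / r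
        + (4 * σ ^ 2 * Dv + σ) * r ^ 2 * θ r + C * θ r = lam * θ r ^ q)
    (hθ0 : θ 0 = 1) (hdθ0 : dθ 0 = 0) : ∀ r ∈ Ioc 0 b, dθ r < 0 := by
  intro r hr
  have hb : 0 < b := hr.1.trans_le hr.2
  have key {x : ℝ} (hx : x ∈ Ioc 0 b) := profile_deriv_neg_of_forcing_neg hN hDv hdθ hODE hdθ0 hx
  have hθc : ContinuousWithinAt θ (Ici 0) 0 := (hθ 0 ⟨le_rfl, hb.le⟩).continuousWithinAt
  have hθqc := hθc.rpow_const (p := q) (Or.inl (by simp [hθ0]))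
  have hFc : ContinuousWithinAt
      (fun s => lam * θ s ^ q - (4 * σ ^ 2 * Dv + σ) * s ^ 2 * θ s - C * θ s) (Ici 0) 0 := by
    fun_prop
  have hF0 : lam * θ 0 ^ q - (4 * σ ^ 2 * Dv + σ) * 0 ^ 2 * θ 0 - C * θ 0 < 0 := by
    simp [hθ0, hC]
  obtain ⟨δ, hδ, hFδ⟩ := mem_nhdsGT_iff_exists_Ioo_subset.1 <|
    (hFc.tendsto.eventually_lt_const hF0).filter_mono (nhdsWithin_mono _ Ioi_subset_Ici_self)
  refine forall_mem_Ioc_neg_of_forall_mem_Ioo_neg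
    (fun s hs => (hdθ s (Ioc_subset_Icc_self hs)).continuousWithinAt.mono fun _ ht => ht.1.le)
    ?_ (fun x hx hneg => key hx fun s hs => ?_) r hr
  · filter_upwards [Ioo_mem_nhdsGT (lt_min hδ hb)] with x hx
    exact key ⟨hx.1, hx.2.le.trans (min_le_right _ _)⟩
      fun s hs => hFδ ⟨hs.1, hs.2.trans (hx.2.trans_le (min_le_left _ _))⟩
  · have hanti := strictAntiOn_Icc_of_hasDerivWithinAt_Ici_neg le_rfl
      (fun t ht => hθ t ⟨ht.1, ht.2.trans hx.2⟩) hneg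
    have hle : θ s ≤ 1 :=
      hθ0 ▸ hanti.antitoneOn (left_mem_Icc.2 hx.1.le) ⟨hs.1.le, hs.2.le⟩ hs.1.le
    exact mul_rpow_sub_mul_sub_mul_neg hlam hC hq (by positivity)
      (hpos s ⟨hs.1.le, hs.2.le.trans hx.2⟩) hle

end Profile

theorem stmt7_general
    (N : ℕ) (hN : 1 ≤ N) (Du Dv q κ lam σ : ℝ)
    (hDu : 0 < Du) (hDv : 0 < Dv) (hq : 1 < q)
    (hσ : σ = 1 / (4 * Du * (q - 1)))
    (hlam : 0 < lam) (hlam' : lam < 2 * N * σ * Dv - κ)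
    (R : EReal)
    (θ dθ ddθ : ℝ → ℝ)
    (hpos : ∀ r : ℝ, 0 ≤ r → (r : EReal) < R → 0 < θ r)
    (hθ' : ∀ r : ℝ, 0 ≤ r → (r : EReal) < R → HasDerivWithinAt θ (dθ r) (Ici 0) r)
    (hθ'' : ∀ r : ℝ, 0 ≤ r → (r : EReal) < R → HasDerivWithinAt dθ (ddθ r) (Ici 0) r)
    (hODE : ∀ r : ℝ, 0 < r → (r : EReal) < R →
      Dv * ddθ r + (4 * σ * Dv + 1/2) * r * dθ r + Dv * ((N : ℝ) - 1) * dθ r / r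
        + (4 * σ ^ 2 * Dv + σ) * r ^ 2 * θ r + (2 * N * σ * Dv - κ) * θ r
          = lam * θ r ^ q)
    (hθ0 : θ 0 = 1) (hdθ0 : dθ 0 = 0) :
    (∀ r : ℝ, 0 < r → (r : EReal) < R → dθ r < 0) ∧
      StrictAntiOn θ {r : ℝ | 0 ≤ r ∧ (r : EReal) < R} := by
  have hσ0 : 0 ≤ σ := by
    have := sub_pos.2 hq
    rw [hσ]
    positivity
  have hdom {s r : ℝ} (hs : s ≤ r) (hr : (r : EReal) < R) : (s : EReal) < R :=
    (EReal.coe_le_coe_iff.2 hs).trans_lt hr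
  have hneg {b : ℝ} (hb : (b : EReal) < R) : ∀ r ∈ Ioc 0 b, dθ r < 0 :=
    profile_deriv_neg hN hDv hσ0 hlam.le hlam' hq.le
      (fun s hs => hpos s hs.1 (hdom hs.2 hb)) (fun s hs => hθ' s hs.1 (hdom hs.2 hb))
      (fun s hs => hθ'' s hs.1 (hdom hs.2 hb)) (fun s hs => hODE s hs.1 (hdom hs.2 hb))
      hθ0 hdθ0
  refine ⟨fun r hr hrR => hneg hrR r ⟨hr, le_rfl⟩, fun x hx y hy hxy => ?_⟩
  exact strictAntiOn_Icc_of_hasDerivWithinAt_Ici_neg hx.1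
    (fun s hs => hθ' s (hx.1.trans hs.1) (hdom hs.2 hy.2))
    (fun s hs => hneg hy.2 s ⟨hx.1.trans_lt hs.1, hs.2.le⟩)
    (left_mem_Icc.2 hxy.le) (right_mem_Icc.2 hxy.le) hxy

/-- For the transformed profile equation (with `σ = 1/(4Dᵤ(q−1))`)
`Dᵥ θ'' + (4σDᵥ + 1/2) r θ' + Dᵥ(N−1)θ'/r + (4σ²Dᵥ + σ) r² θ + (2NσDᵥ − κ) θ = λ θ^q`
on `(0,R)` with `θ(0)=1`, `θ'(0)=0`, `κ < 0` and `0 < λ < 2NσDᵥ − κ`, any positive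
C² solution satisfies `θ'(r) < 0` on `(0,R)`, i.e. `θ` is strictly decreasing on `[0,R)`. -/
theorem stmt7
    (N : ℕ) (hN : 1 ≤ N) (Du Dv q κ lam σ : ℝ)
    (hDu : 0 < Du) (hDv : 0 < Dv) (hq : 1 < q) (hκ : κ < 0)
    (hσ : σ = 1 / (4 * Du * (q - 1)))
    (hlam : 0 < lam) (hlam' : lam < 2 * N * σ * Dv - κ)
    (R : EReal) (hR : 0 < R)
    (θ dθ ddθ : ℝ → ℝ)
    (hpos : ∀ r : ℝ, 0 ≤ r → (r : EReal) < R → 0 < θ r)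
    (hθ' : ∀ r : ℝ, 0 ≤ r → (r : EReal) < R → HasDerivWithinAt θ (dθ r) (Ici 0) r)
    (hθ'' : ∀ r : ℝ, 0 ≤ r → (r : EReal) < R → HasDerivWithinAt dθ (ddθ r) (Ici 0) r)
    (hODE : ∀ r : ℝ, 0 < r → (r : EReal) < R →
      Dv * ddθ r + (4 * σ * Dv + 1/2) * r * dθ r + Dv * ((N : ℝ) - 1) * dθ r / r
        + (4 * σ ^ 2 * Dv + σ) * r ^ 2 * θ r + (2 * N * σ * Dv - κ) * θ r
          = lam * θ r ^ q)
    (hθ0 : θ 0 = 1) (hdθ0 : dθ 0 = 0) :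
    (∀ r : ℝ, 0 < r → (r : EReal) < R → dθ r < 0) ∧
      StrictAntiOn θ {r : ℝ | 0 ≤ r ∧ (r : EReal) < R} :=
  stmt7_general N hN Du Dv q κ lam σ hDu hDv hq hσ hlam hlam' R θ dθ ddθ hpos hθ' hθ'' hODE hθ0 hdθ0
end

section
/- Let N ≥ 1 be an integer, D_u, D_v > 0, q > 1, −N/2 ≤ κ < 0, and set σ = 1/(4 D_u (q−1)). Suppose 0 < λ < 2 N σ D_v − κ, and let θ : [0,∞) → ℝ be a positive C² solution on all of [0,∞) of D_v θ'' + (4σ D_v + 1/2) r θ' + D_v (N−1) θ'/r + (4σ² D_v + σ) r² θ + (2 N σ D_v − κ) θ = λ θ^q with θ(0) = 1, θ'(0) = 0. Then θ is decreasing on [0,∞) and lim_{r→∞} θ(r) = 0. -/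
/-!
With `β = 4σ + 1/(2 D_v)` and `ρ(r) = r^(N-1) e^(β r²/2)`, the equation divided by `D_v` reads
`(ρ θ')' = ρ S` with `S = λ' θ^q - c θ - a r² θ`, where `0 < λ' < c` and `a > 0`. Hence `S < 0`
wherever `θ ≤ 1`, and a continuity argument starting from `θ(0) = 1`, `θ'(0) = 0` shows that the
flux `ρ θ'` decreases from `0`: so `θ' < 0` on `(0, ∞)`. If `θ` stayed above some `L > 0`, then
`S ≤ λ' - a L r²`; comparing `ρ θ'` with `(a L / β) r ρ`, whose derivative has the same Gaussian
growth, gives `θ' ≤ M - (a L / β) r`, and `θ` would become negative.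
-/

open Real Set Filter Topology

/-- The integrating factor of `θ'' + (β r + (N - 1) / r) θ'`. -/
noncomputable def radialWeight (N : ℕ) (β r : ℝ) : ℝ := r ^ (N - 1) * exp (β * r ^ 2 / 2)

section RadialWeight

variable {N : ℕ} {β : ℝ}

lemma radialWeight_pos {r : ℝ} (hr : 0 < r) : 0 < radialWeight N β r := by
  unfold radialWeight; positivity

lemma continuous_radialWeight : Continuous (radialWeight N β) := by
  unfold radialWeight; fun_prop

lemma one_le_radialWeight (hβ : 0 ≤ β) {r : ℝ} (hr : 1 ≤ r) : 1 ≤ radialWeight N β r :=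
  one_le_mul_of_one_le_of_one_le (one_le_pow₀ hr) (one_le_exp (by positivity))

lemma hasDerivAt_radialWeight {r : ℝ} (hr : 0 < r) :
    HasDerivAt (radialWeight N β) ((((N - 1 : ℕ) : ℝ) / r + β * r) * radialWeight N β r) r := by
  have hpow : HasDerivAt (fun r : ℝ => r ^ (N - 1)) (((N - 1 : ℕ) : ℝ) / r * r ^ (N - 1)) r := by
    refine (hasDerivAt_pow (N - 1) r).congr_deriv ?_
    rcases Nat.eq_zero_or_eq_succ_pred (N - 1) with hk | hk
    · simp [hk]
    · rw [hk, Nat.succ_sub_one, pow_succ]; field_simp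
  have hexp : HasDerivAt (fun r : ℝ => exp (β * r ^ 2 / 2)) (β * r * exp (β * r ^ 2 / 2)) r := by
    convert (((hasDerivAt_pow 2 r).const_mul β).div_const 2).exp using 1
    push_cast; ring
  exact (hpow.mul hexp).congr_deriv (by unfold radialWeight; ring)

end RadialWeight

lemma neg_of_hasDerivAt_weight_mul {w u S : ℝ → ℝ} {b : ℝ}
    (hw : ∀ r ∈ Ioc 0 b, 0 < w r) (hcont : ContinuousOn (fun r => w r * u r) (Icc 0 b))
    (h0 : w 0 * u 0 = 0)
    (hderiv : ∀ r ∈ Ioo 0 b, HasDerivAt (fun r => w r * u r) (w r * S r) r)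
    (hS : ∀ r ∈ Ioo 0 b, S r < 0) : ∀ r ∈ Ioc 0 b, u r < 0 := by
  intro r hr
  have hanti : StrictAntiOn (fun r => w r * u r) (Icc 0 b) := by
    refine strictAntiOn_of_hasDerivWithinAt_neg (f' := fun r => w r * S r) (convex_Icc 0 b) hcont
      (fun x hx => ?_) (fun x hx => ?_) <;> rw [interior_Icc] at hx
    · exact (hderiv x hx).hasDerivWithinAt
    · exact mul_neg_of_pos_of_neg (hw x (Ioo_subset_Ioc_self hx)) (hS x hx)
  have hwu : w r * u r < 0 :=
    h0 ▸ hanti (left_mem_Icc.2 (hr.1.le.trans hr.2)) (Ioc_subset_Icc_self hr) hr.1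
  exact neg_of_mul_neg_right hwu (hw r hr).le

lemma ContinuousOn.neg_on_Ici_of_neg_on_Ioo {S : ℝ → ℝ} (hS : ContinuousOn S (Ici 0))
    (h0 : S 0 < 0) (hstep : ∀ t > 0, (∀ r ∈ Ioo 0 t, S r < 0) → S t < 0) :
    ∀ r ∈ Ici 0, S r < 0 := by
  by_contra! hex
  obtain ⟨r₀, hr₀, hSr₀⟩ := hex
  set T := Ici (0 : ℝ) ∩ S ⁻¹' Ici 0
  have hbdd : BddBelow T := ⟨0, fun x hx => hx.1⟩
  have htT : sInf T ∈ T :=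
    (hS.preimage_isClosed_of_isClosed isClosed_Ici isClosed_Ici).csInf_mem ⟨r₀, hr₀, hSr₀⟩ hbdd
  have ht : 0 < sInf T := lt_of_le_of_ne htT.1 fun h => h0.not_ge (h ▸ htT.2)
  refine (hstep _ ht fun r hr => ?_).not_ge htT.2
  by_contra! hSr
  exact hr.2.not_ge (csInf_le hbdd ⟨hr.1.le, hSr⟩)

lemma exists_neg_of_hasDerivAt_le_sub_mul {f u : ℝ → ℝ} {M c : ℝ} (hc : 0 < c)
    (hf : ∀ r ≥ 1, HasDerivAt f (u r) r) (hu : ∀ r ≥ 1, u r ≤ M - c * r) :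
    ∃ r ≥ 1, f r < 0 := by
  set R := max 1 ((M + 1) / c)
  have hR : 1 ≤ R := le_max_left _ _
  have hu' : ∀ r ≥ R, u r ≤ -1 := fun r hr => by
    have : M + 1 ≤ c * r := (div_le_iff₀' hc).1 ((le_max_right _ _).trans hr)
    linarith [hu r (hR.trans hr)]
  have hf' : ∀ r ≥ R, HasDerivAt f (u r) r := fun r hr => hf r (hR.trans hr)
  have hslope := (convex_Ici R).image_sub_le_mul_sub_of_deriv_le
    (fun x hx => (hf' x hx).continuousAt.continuousWithinAt)
    (fun x hx => (hf' x (interior_subset hx)).differentiableAt.differentiableWithinAt)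
    (fun x hx => (hf' x (interior_subset hx)).deriv ▸ hu' x (interior_subset hx))
    R self_mem_Ici (R + |f R| + 1) (by simp only [mem_Ici]; linarith [abs_nonneg (f R)])
    (by linarith [abs_nonneg (f R)])
  refine ⟨R + |f R| + 1, by linarith [abs_nonneg (f R)], ?_⟩
  linarith [le_abs_self (f R)]

lemma exists_le_sub_mul_of_hasDerivAt_weight_mul {N : ℕ} {β A B : ℝ} {u S : ℝ → ℝ}
    (hβ : 0 < β) (hA : 0 ≤ A) (hB : 0 ≤ B)
    (hcont : ContinuousOn (fun r => radialWeight N β r * u r) (Ici 1))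
    (hderiv : ∀ r > 1,
      HasDerivAt (fun r => radialWeight N β r * u r) (radialWeight N β r * S r) r)
    (hS : ∀ r > 1, S r ≤ A - B * r ^ 2) :
    ∃ M, ∀ r ≥ 1, u r ≤ M - B / β * r := by
  set ρ := radialWeight N β
  set n : ℝ := ((N - 1 : ℕ) : ℝ)
  set K := A + B * (1 + n) / β
  have hK : 0 ≤ K := by positivity
  -- `H' ≤ K ρ (1 - r)`: the `B / β` term absorbs the Gaussian part of the source
  set H := fun r => ρ r * u r + B / β * (r * ρ r) - K / β * ρ r
  have hH : AntitoneOn H (Ici 1) := by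
    refine antitoneOn_of_hasDerivWithinAt_nonpos (convex_Ici 1)
      (f' := fun r => ρ r * S r + B / β * ((1 + n + β * r ^ 2) * ρ r)
        - K / β * ((n / r + β * r) * ρ r)) ?_ (fun r hr => ?_) (fun r hr => ?_)
    · have hrρ : Continuous fun r => B / β * (r * ρ r) :=
        continuous_const.mul (continuous_id.mul continuous_radialWeight)
      exact (hcont.add hrρ.continuousOn).sub
        (continuous_const.mul continuous_radialWeight).continuousOn
    all_goals rw [interior_Ici] at hr
    all_goals have hr0 : (0 : ℝ) < r := zero_lt_one.trans hr
    · have hρ' := hasDerivAt_radialWeight (N := N) (β := β) hr0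
      have hrρ := ((hasDerivAt_id r).mul hρ').congr_deriv
        (show 1 * ρ r + r * ((n / r + β * r) * ρ r) = (1 + n + β * r ^ 2) * ρ r by
          field_simp; ring)
      exact (((hderiv r hr).add (hrρ.const_mul _)).sub (hρ'.const_mul _)).hasDerivWithinAt
    · have hρ := radialWeight_pos (N := N) (β := β) hr0
      have hSρ : ρ r * S r ≤ ρ r * (A - B * r ^ 2) := mul_le_mul_of_nonneg_left (hS r hr) hρ.le
      have hn : K / β * (β * r * ρ r) ≤ K / β * ((n / r + β * r) * ρ r) := by
        gcongr; linarith [show 0 ≤ n / r by positivity]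
      have hid : ρ r * (A - B * r ^ 2) + B / β * ((1 + n + β * r ^ 2) * ρ r)
          - K / β * (β * r * ρ r) = K * ρ r * (1 - r) := by
        simp only [K]; field_simp; ring
      nlinarith [mul_nonneg (mul_nonneg hK hρ.le) (sub_nonneg.2 (le_of_lt hr))]
  refine ⟨|H 1| + K / β, fun r hr => ?_⟩
  have hρ1 := one_le_radialWeight (N := N) hβ.le hr
  have hHr : H r ≤ |H 1| * ρ r :=
    (hH self_mem_Ici hr hr).trans
      ((le_abs_self _).trans (le_mul_of_one_le_right (abs_nonneg _) hρ1))
  have : ρ r * u r ≤ ρ r * (|H 1| + K / β - B / β * r) := by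
    simp only [H] at hHr; nlinarith
  exact le_of_mul_le_mul_left this (zero_lt_one.trans_le hρ1)

noncomputable def reactionTerm (lam c a q r t : ℝ) : ℝ := lam * t ^ q - c * t - a * r ^ 2 * t

section ReactionTerm

variable {lam c a q r t : ℝ}

lemma reactionTerm_neg_of_le_one (hlam : 0 ≤ lam) (hlamc : lam < c) (ha : 0 ≤ a) (hq : 1 ≤ q)
    (ht : 0 < t) (ht1 : t ≤ 1) : reactionTerm lam c a q r t < 0 := by
  have htq : lam * t ^ q ≤ lam * t :=
    mul_le_mul_of_nonneg_left (rpow_le_self_of_le_one ht.le ht1 hq) hlam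
  have : lam * t < c * t := mul_lt_mul_of_pos_right hlamc ht
  unfold reactionTerm; nlinarith [mul_nonneg (mul_nonneg ha (sq_nonneg r)) ht.le]

lemma reactionTerm_le_of_le {L : ℝ} (hlam : 0 ≤ lam) (hc : 0 ≤ c) (ha : 0 ≤ a) (hq : 0 ≤ q)
    (hLt : L ≤ t) (ht0 : 0 ≤ t) (ht1 : t ≤ 1) :
    reactionTerm lam c a q r t ≤ lam - a * L * r ^ 2 := by
  have htq : lam * t ^ q ≤ lam := mul_le_of_le_one_right hlam (rpow_le_one ht0 ht1 hq)
  have : a * r ^ 2 * L ≤ a * r ^ 2 * t := by gcongr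
  unfold reactionTerm; nlinarith [mul_nonneg hc ht0]

end ReactionTerm

structure IsRadialProfile (N : ℕ) (β a c lam q : ℝ) (θ dθ ddθ : ℝ → ℝ) : Prop where
  pos : ∀ r ∈ Ici (0 : ℝ), 0 < θ r
  hasDerivWithinAt : ∀ r ∈ Ici (0 : ℝ), HasDerivWithinAt θ (dθ r) (Ici 0) r
  hasDerivWithinAt_deriv : ∀ r ∈ Ici (0 : ℝ), HasDerivWithinAt dθ (ddθ r) (Ici 0) r
  ode : ∀ r > 0, ddθ r + (β * r + ((N : ℝ) - 1) / r) * dθ r = reactionTerm lam c a q r (θ r)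
  initial : θ 0 = 1
  initial_deriv : dθ 0 = 0

namespace IsRadialProfile

variable {N : ℕ} {β a c lam q : ℝ} {θ dθ ddθ : ℝ → ℝ}

lemma continuousOn (h : IsRadialProfile N β a c lam q θ dθ ddθ) : ContinuousOn θ (Ici 0) :=
  fun r hr => (h.hasDerivWithinAt r hr).continuousWithinAt

lemma hasDerivAt (h : IsRadialProfile N β a c lam q θ dθ ddθ) {r : ℝ} (hr : 0 < r) :
    HasDerivAt θ (dθ r) r :=
  (h.hasDerivWithinAt r hr.le).hasDerivAt (Ici_mem_nhds hr)

lemma continuousOn_flux (h : IsRadialProfile N β a c lam q θ dθ ddθ) :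
    ContinuousOn (fun r => radialWeight N β r * dθ r) (Ici 0) :=
  continuous_radialWeight.continuousOn.mul
    fun r hr => (h.hasDerivWithinAt_deriv r hr).continuousWithinAt

lemma hasDerivAt_flux (h : IsRadialProfile N β a c lam q θ dθ ddθ) (hN : 1 ≤ N) {r : ℝ}
    (hr : 0 < r) :
    HasDerivAt (fun r => radialWeight N β r * dθ r)
      (radialWeight N β r * reactionTerm lam c a q r (θ r)) r := by
  refine ((hasDerivAt_radialWeight hr).mul
    ((h.hasDerivWithinAt_deriv r hr.le).hasDerivAt (Ici_mem_nhds hr))).congr_deriv ?_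
  rw [← h.ode r hr, Nat.cast_pred hN]
  ring

lemma antitoneOn_Icc (h : IsRadialProfile N β a c lam q θ dθ ddθ) (hN : 1 ≤ N) {b : ℝ}
    (hS : ∀ r ∈ Ioo 0 b, reactionTerm lam c a q r (θ r) < 0) : AntitoneOn θ (Icc 0 b) := by
  have hdθ := neg_of_hasDerivAt_weight_mul (fun r hr => radialWeight_pos hr.1)
    (h.continuousOn_flux.mono Icc_subset_Ici_self) (by simp [h.initial_deriv])
    (fun r hr => h.hasDerivAt_flux hN hr.1) hS
  refine antitoneOn_of_hasDerivWithinAt_nonpos (f' := dθ) (convex_Icc 0 b)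
    (h.continuousOn.mono Icc_subset_Ici_self) (fun r hr => ?_) (fun r hr => ?_) <;>
    rw [interior_Icc] at hr
  · exact (h.hasDerivAt hr.1).hasDerivWithinAt
  · exact (hdθ r (Ioo_subset_Ioc_self hr)).le

lemma reactionTerm_neg (h : IsRadialProfile N β a c lam q θ dθ ddθ) (hN : 1 ≤ N) (hlam : 0 ≤ lam)
    (hlamc : lam < c) (ha : 0 ≤ a) (hq : 1 ≤ q) :
    ∀ r ∈ Ici 0, reactionTerm lam c a q r (θ r) < 0 := by
  have hcont : ContinuousOn (fun r => reactionTerm lam c a q r (θ r)) (Ici 0) := by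
    have hθ := h.continuousOn
    have hθq := hθ.rpow_const (p := q) fun r hr => Or.inl (h.pos r hr).ne'
    unfold reactionTerm
    fun_prop
  refine hcont.neg_on_Ici_of_neg_on_Ioo
    (reactionTerm_neg_of_le_one hlam hlamc ha hq (h.pos 0 self_mem_Ici) h.initial.le)
    fun t ht hS => reactionTerm_neg_of_le_one hlam hlamc ha hq (h.pos t ht.le) ?_
  exact h.initial ▸ h.antitoneOn_Icc hN hS (left_mem_Icc.2 ht.le) (right_mem_Icc.2 ht.le) ht.le

lemma antitoneOn (h : IsRadialProfile N β a c lam q θ dθ ddθ) (hN : 1 ≤ N) (hlam : 0 ≤ lam)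
    (hlamc : lam < c) (ha : 0 ≤ a) (hq : 1 ≤ q) : AntitoneOn θ (Ici 0) :=
  fun _ hx _ hy hxy => h.antitoneOn_Icc hN
    (fun r hr => h.reactionTerm_neg hN hlam hlamc ha hq r hr.1.le) ⟨hx, hxy⟩ ⟨hy, le_rfl⟩ hxy

lemma tendsto_zero (h : IsRadialProfile N β a c lam q θ dθ ddθ) (hN : 1 ≤ N) (hβ : 0 < β)
    (hlam : 0 ≤ lam) (hlamc : lam < c) (ha : 0 < a) (hq : 1 ≤ q) :
    Tendsto θ atTop (𝓝 0) := by
  have hmono := h.antitoneOn hN hlam hlamc ha.le hq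
  have hle : ∀ r ∈ Ici 0, θ r ≤ 1 := fun r hr => h.initial ▸ hmono self_mem_Ici hr hr
  have hexists_lt : ∀ L > 0, ∃ r ∈ Ici 0, θ r < L := by
    intro L hL
    by_contra! hLθ
    obtain ⟨M, hM⟩ := exists_le_sub_mul_of_hasDerivAt_weight_mul (u := dθ) hβ hlam
      (mul_pos ha hL).le (h.continuousOn_flux.mono (Ici_subset_Ici.2 zero_le_one))
      (fun r hr => h.hasDerivAt_flux hN (zero_lt_one.trans hr)) fun r hr => by
        have hr0 : r ∈ Ici 0 := zero_le_one.trans hr.le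
        exact reactionTerm_le_of_le hlam (hlam.trans hlamc.le) ha.le (zero_le_one.trans hq)
          (hLθ r hr0) (h.pos r hr0).le (hle r hr0)
    obtain ⟨r, hr, hθr⟩ := exists_neg_of_hasDerivAt_le_sub_mul (f := θ) (by positivity)
      (fun r hr => h.hasDerivAt (zero_lt_one.trans_le hr)) hM
    exact hθr.not_gt (h.pos r (zero_le_one.trans hr))
  refine tendsto_order.2 ⟨fun l hl => ?_, fun l hl => ?_⟩
  · filter_upwards [eventually_ge_atTop 0] with r hr using hl.trans (h.pos r hr)
  · obtain ⟨r₀, hr₀, hθr₀⟩ := hexists_lt l hl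
    filter_upwards [eventually_ge_atTop r₀] with r hr using
      (hmono hr₀ (hr₀.trans hr) hr).trans_lt hθr₀

end IsRadialProfile

theorem stmt9_general
    (N : ℕ) (hN : 1 ≤ N) (Du Dv q κ lam σ : ℝ)
    (hDu : 0 < Du) (hDv : 0 < Dv) (hq : 1 < q)
    (hσ : σ = 1 / (4 * Du * (q - 1)))
    (hlam : 0 < lam) (hlam' : lam < 2 * N * σ * Dv - κ)
    (θ dθ ddθ : ℝ → ℝ)
    (hpos : ∀ r ∈ Ici (0:ℝ), 0 < θ r)
    (hθ' : ∀ r ∈ Ici (0:ℝ), HasDerivWithinAt θ (dθ r) (Ici 0) r)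
    (hθ'' : ∀ r ∈ Ici (0:ℝ), HasDerivWithinAt dθ (ddθ r) (Ici 0) r)
    (hODE : ∀ r ∈ Ioi (0:ℝ),
      Dv * ddθ r + (4 * σ * Dv + 1/2) * r * dθ r + Dv * ((N : ℝ) - 1) * dθ r / r
        + (4 * σ ^ 2 * Dv + σ) * r ^ 2 * θ r + (2 * N * σ * Dv - κ) * θ r
          = lam * θ r ^ q)
    (hθ0 : θ 0 = 1) (hdθ0 : dθ 0 = 0) :
    AntitoneOn θ (Ici 0) ∧ Tendsto θ atTop (nhds 0) := by
  have hσ0 : 0 < σ := hσ ▸ by have := sub_pos.2 hq; positivity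
  have h : IsRadialProfile N (4 * σ + 1 / (2 * Dv)) ((4 * σ ^ 2 * Dv + σ) / Dv)
      ((2 * N * σ * Dv - κ) / Dv) (lam / Dv) q θ dθ ddθ := by
    refine ⟨hpos, hθ', hθ'', fun r hr => ?_, hθ0, hdθ0⟩
    have hode := hODE r hr
    unfold reactionTerm
    field_simp at hode ⊢
    linear_combination hode
  have hlamc : lam / Dv < (2 * N * σ * Dv - κ) / Dv := div_lt_div_of_pos_right hlam' hDv
  exact ⟨h.antitoneOn hN (by positivity) hlamc (by positivity) hq.le,
    h.tendsto_zero hN (by positivity) (by positivity) hlamc (by positivity) hq.le⟩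

/-- For the transformed profile equation (with `σ = 1/(4Dᵤ(q−1))`)
`Dᵥ θ'' + (4σDᵥ + 1/2) r θ' + Dᵥ(N−1)θ'/r + (4σ²Dᵥ + σ) r² θ + (2NσDᵥ − κ) θ = λ θ^q`
on `(0,∞)` with `θ(0)=1`, `θ'(0)=0`, `−N/2 ≤ κ < 0` and `0 < λ < 2NσDᵥ − κ`,
any globally defined positive C² solution `θ` is decreasing on `[0,∞)` and
tends to `0` at infinity. -/
theorem stmt9
    (N : ℕ) (hN : 1 ≤ N) (Du Dv q κ lam σ : ℝ)
    (hDu : 0 < Du) (hDv : 0 < Dv) (hq : 1 < q)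
    (hκ₁ : -(N : ℝ) / 2 ≤ κ) (hκ₂ : κ < 0)
    (hσ : σ = 1 / (4 * Du * (q - 1)))
    (hlam : 0 < lam) (hlam' : lam < 2 * N * σ * Dv - κ)
    (θ dθ ddθ : ℝ → ℝ)
    (hpos : ∀ r ∈ Ici (0:ℝ), 0 < θ r)
    (hθ' : ∀ r ∈ Ici (0:ℝ), HasDerivWithinAt θ (dθ r) (Ici 0) r)
    (hθ'' : ∀ r ∈ Ici (0:ℝ), HasDerivWithinAt dθ (ddθ r) (Ici 0) r)
    (hODE : ∀ r ∈ Ioi (0:ℝ),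
      Dv * ddθ r + (4 * σ * Dv + 1/2) * r * dθ r + Dv * ((N : ℝ) - 1) * dθ r / r
        + (4 * σ ^ 2 * Dv + σ) * r ^ 2 * θ r + (2 * N * σ * Dv - κ) * θ r
          = lam * θ r ^ q)
    (hθ0 : θ 0 = 1) (hdθ0 : dθ 0 = 0) :
    AntitoneOn θ (Ici 0) ∧ Tendsto θ atTop (nhds 0) :=
  stmt9_general N hN Du Dv q κ lam σ hDu hDv hq hσ hlam hlam' θ dθ ddθ hpos hθ' hθ'' hODE hθ0 hdθ0
end
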